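/- arXiv:0806.1040 — 8 statements merged into one kernel-verified Lean document; each statement's English description precedes it below -/
import Mathlib

section
/- For any finite set A of positive real numbers, |AA| · |A+A|² ≥ |A|⁴ / (4·⌈log₂|A|⌉). -/
/-!
Solymosi's argument. Let `m(l)` be the number of points of `A × A` on the line `y = l x`. The
multiplicative energy `Eₘ[A]` equals `∑ m(l)²` over the slopes `l ∈ A / A`, and Cauchy–Schwarz gives
`|A|⁴ ≤ |AA| · Eₘ[A]`. Split the slopes into `⌈log |A|⌉` dyadic classes according to `m(l)`, plus
the slope `1`. Inside one class, order the slopes `l₀ < ⋯ < l_T`; adding a point on the line of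
slope `lᵢ` to a point on the line of slope `lᵢ₊₁` gives `m(lᵢ) m(lᵢ₊₁)` distinct points of
`(A + A) × (A + A)`, lying strictly between those two lines, so different `i` give disjoint sets.
Since `m(lᵢ)² ≤ 2 m(lᵢ) m(lᵢ₊₁)` within a class, each class contributes at most `3 |A + A|²`,
and the slope `1` at most `|A|²`.
-/

open Finset Pointwise
open scoped Combinatorics.Additive

section Field

variable {K : Type*} [Field K] [DecidableEq K] {A : Finset K} {l : K}

/-- The first coordinates of the points of `A × A` on the line `y = l x`. -/
def rayPoints (A : Finset K) (l : K) : Finset K := {b ∈ A | l * b ∈ A}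

lemma rayPoints_subset (A : Finset K) (l : K) : rayPoints A l ⊆ A := filter_subset _ _

lemma rayPoints_nonempty (hA : 0 ∉ A) (hl : l ∈ A / A) : (rayPoints A l).Nonempty := by
  obtain ⟨a, ha, b, hb, rfl⟩ := mem_div.1 hl
  have hb0 : b ≠ 0 := ne_of_mem_of_not_mem hb hA
  exact ⟨b, mem_filter.2 ⟨hb, by rwa [div_mul_cancel₀ _ hb0]⟩⟩

lemma mulEnergy_eq_sum_card_rayPoints_sq (hA : 0 ∉ A) :
    Eₘ[A] = ∑ l ∈ A / A, #(rayPoints A l) ^ 2 := by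
  set Q := {q ∈ (A ×ˢ A) ×ˢ A ×ˢ A | q.1.1 * q.2.1 = q.1.2 * q.2.2}
  have hratio : ∀ q ∈ Q, q.1.1 / q.1.2 ∈ A / A := by
    intro q hq
    simp only [Q, mem_filter, mem_product] at hq
    exact div_mem_div hq.1.1.1 hq.1.1.2
  rw [mulEnergy, card_eq_sum_card_fiberwise hratio]
  refine sum_congr rfl fun l _ => ?_
  have hfiber : ∀ a₁ a₂ b₁ b₂ : K, a₂ ∈ A → a₁ * b₁ = a₂ * b₂ → a₁ / a₂ = l →
      l * a₂ = a₁ ∧ l * b₁ = b₂ := by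
    rintro a₁ a₂ b₁ b₂ ha₂ h rfl
    have ha₂ : a₂ ≠ 0 := ne_of_mem_of_not_mem ha₂ hA
    constructor
    · field_simp
    · field_simp
      rw [h]
  rw [sq, ← card_product]
  refine card_nbij' (fun q => (q.1.2, q.2.1)) (fun p => ((l * p.1, p.1), (p.2, l * p.2)))
    ?_ ?_ ?_ fun _ _ => rfl
  · rintro ⟨⟨a₁, a₂⟩, b₁, b₂⟩ hq
    simp only [Q, coe_filter, mem_filter, mem_product, Set.mem_ofPred_eq] at hq
    obtain ⟨⟨⟨⟨ha₁, ha₂⟩, hb₁, hb₂⟩, h⟩, hl⟩ := hq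
    obtain ⟨h₁, h₂⟩ := hfiber a₁ a₂ b₁ b₂ ha₂ h hl
    simp only [coe_product, Set.mem_prod, rayPoints, coe_filter, Set.mem_ofPred_eq, h₁, h₂]
    exact ⟨⟨ha₂, ha₁⟩, hb₁, hb₂⟩
  · rintro ⟨b, c⟩ hp
    simp only [coe_product, Set.mem_prod, rayPoints, coe_filter, Set.mem_ofPred_eq] at hp
    simp only [Q, coe_filter, mem_filter, mem_product, Set.mem_ofPred_eq]
    obtain ⟨⟨hb, hlb⟩, hc, hlc⟩ := hp
    have hb0 : b ≠ 0 := ne_of_mem_of_not_mem hb hA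
    exact ⟨⟨⟨⟨hlb, hb⟩, hc, hlc⟩, by ring⟩, by field_simp⟩
  · rintro ⟨⟨a₁, a₂⟩, b₁, b₂⟩ hq
    simp only [Q, coe_filter, mem_filter, mem_product, Set.mem_ofPred_eq] at hq
    obtain ⟨⟨⟨⟨-, ha₂⟩, -, -⟩, h⟩, hl⟩ := hq
    obtain ⟨h₁, h₂⟩ := hfiber a₁ a₂ b₁ b₂ ha₂ h hl
    simp [h₁, h₂]

/-- The sums of a point on the line `y = l x` and a point on the line `y = l' x`, both in
`A × A`. -/
def raySums (A : Finset K) (l l' : K) : Finset (K × K) :=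
  (rayPoints A l ×ˢ rayPoints A l').image fun p => (p.1 + p.2, l * p.1 + l' * p.2)

lemma card_raySums {l l' : K} (h : l ≠ l') :
    #(raySums A l l') = #(rayPoints A l) * #(rayPoints A l') := by
  rw [raySums, card_image_of_injective _ ?_, card_product]
  rintro ⟨b, c⟩ ⟨b', c'⟩ hbc
  simp only [Prod.mk.injEq] at hbc ⊢
  obtain ⟨h₁, h₂⟩ := hbc
  have : (l' - l) * (c - c') = 0 := by linear_combination h₂ - l * h₁
  have hc : c = c' := by simpa [sub_eq_zero, h.symm] using this
  exact ⟨by linear_combination h₁ - hc, hc⟩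

lemma raySums_subset (A : Finset K) (l l' : K) : raySums A l l' ⊆ (A + A) ×ˢ (A + A) := by
  simp only [raySums, image_subset_iff, mem_product, rayPoints, mem_filter]
  rintro ⟨b, c⟩ ⟨⟨hb, hlb⟩, hc, hlc⟩
  exact ⟨add_mem_add hb hc, add_mem_add hlb hlc⟩

end Field

section Ordered

lemma eq_one_of_forall_mul_mem {R : Type*} [CommRing R] [LinearOrder R] [IsStrictOrderedRing R]
    {A : Finset R} {l : R} (hA : ∀ a ∈ A, 0 < a) (hne : A.Nonempty) (h : ∀ b ∈ A, l * b ∈ A) :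
    l = 1 := by
  have hmin := hA _ (A.min'_mem hne)
  have hmax := hA _ (A.max'_mem hne)
  have h₁ := A.min'_le _ (h _ (A.min'_mem hne))
  have h₂ := A.le_max' _ (h _ (A.max'_mem hne))
  apply le_antisymm <;> nlinarith

variable {K : Type*} [Field K] [LinearOrder K] [IsStrictOrderedRing K] {A : Finset K}

lemma sum_card_rayPoints_sq_le_of_card_le (hA : ∀ a ∈ A, 0 < a) (hne : A.Nonempty)
    (C : Finset K) (hC : ∀ l ∈ C, #A ≤ #(rayPoints A l)) :
    ∑ l ∈ C, #(rayPoints A l) ^ 2 ≤ #A ^ 2 := by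
  have hC₁ : C ⊆ {1} := by
    intro l hl
    have hA' : rayPoints A l = A := eq_of_subset_of_card_le (rayPoints_subset A l) (hC l hl)
    refine mem_singleton.2 (eq_one_of_forall_mul_mem hA hne fun b hb => ?_)
    rw [← hA'] at hb
    exact (mem_filter.1 hb).2
  calc ∑ l ∈ C, #(rayPoints A l) ^ 2
      ≤ ∑ l ∈ {1}, #(rayPoints A l) ^ 2 := sum_le_sum_of_subset hC₁
    _ ≤ #A ^ 2 := by
        rw [sum_singleton]
        exact Nat.pow_le_pow_left (card_le_card (rayPoints_subset A 1)) 2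

lemma mem_raySums_slope_between (hA : ∀ a ∈ A, 0 < a) {l l' : K} (h : l < l') {x : K × K}
    (hx : x ∈ raySums A l l') : l * x.1 < x.2 ∧ x.2 < l' * x.1 := by
  simp only [raySums, mem_image, mem_product, rayPoints, mem_filter] at hx
  obtain ⟨⟨b, c⟩, ⟨⟨hb, -⟩, hc, -⟩, rfl⟩ := hx
  have hb := hA b hb
  have hc := hA c hc
  constructor <;> simp only <;> nlinarith

lemma disjoint_raySums (hA : ∀ a ∈ A, 0 < a) {l₁ l₂ l₃ l₄ : K} (h₁₂ : l₁ < l₂) (h₂₃ : l₂ ≤ l₃)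
    (h₃₄ : l₃ < l₄) : Disjoint (raySums A l₁ l₂) (raySums A l₃ l₄) := by
  refine disjoint_left.2 fun x hx hx' => ?_
  obtain ⟨hlow, hup⟩ := mem_raySums_slope_between hA h₁₂ hx
  have hpos : 0 < x.1 := by nlinarith
  have := (mem_raySums_slope_between hA h₃₄ hx').1
  nlinarith

lemma sum_card_rayPoints_mul_succ_le (hA : ∀ a ∈ A, 0 < a) {T : ℕ} (f : Fin (T + 1) → K)
    (hf : StrictMono f) :
    ∑ i : Fin T, #(rayPoints A (f i.castSucc)) * #(rayPoints A (f i.succ)) ≤ #(A + A) ^ 2 := by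
  have hdisj : ((univ : Finset (Fin T)) : Set (Fin T)).PairwiseDisjoint
      fun i => raySums A (f i.castSucc) (f i.succ) := by
    have hlt : ∀ i j : Fin T, i < j →
        Disjoint (raySums A (f i.castSucc) (f i.succ)) (raySums A (f j.castSucc) (f j.succ)) :=
      fun i j hij => disjoint_raySums hA (hf Fin.castSucc_lt_succ)
        (hf.monotone (Fin.succ_le_castSucc_iff.2 hij)) (hf Fin.castSucc_lt_succ)
    intro i _ j _ hij
    rcases hij.lt_or_gt with h | h
    · exact hlt i j h
    · exact (hlt j i h).symm
  calc ∑ i : Fin T, #(rayPoints A (f i.castSucc)) * #(rayPoints A (f i.succ))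
      = ∑ i : Fin T, #(raySums A (f i.castSucc) (f i.succ)) :=
        sum_congr rfl fun i _ => (card_raySums (hf Fin.castSucc_lt_succ).ne).symm
    _ = #(univ.biUnion fun i : Fin T => raySums A (f i.castSucc) (f i.succ)) :=
        (card_biUnion hdisj).symm
    _ ≤ #((A + A) ×ˢ (A + A)) := card_le_card (biUnion_subset.2 fun i _ => raySums_subset ..)
    _ = #(A + A) ^ 2 := by rw [card_product, sq]

lemma sum_card_rayPoints_sq_le_of_le_two_mul (hA : ∀ a ∈ A, 0 < a) (C : Finset K)
    (hC : ∀ l ∈ C, ∀ l' ∈ C, #(rayPoints A l) ≤ 2 * #(rayPoints A l')) :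
    ∑ l ∈ C, #(rayPoints A l) ^ 2 ≤ 2 * #(A + A) ^ 2 + #A ^ 2 := by
  rcases C.eq_empty_or_nonempty with rfl | hC₀
  · simp
  obtain ⟨T, hT⟩ := Nat.exists_eq_add_one_of_ne_zero hC₀.card_pos.ne'
  set f : Fin (T + 1) → K := fun i => C.orderIsoOfFin hT i
  have hf : StrictMono f := fun i j hij => (C.orderIsoOfFin hT).strictMono hij
  have hfC : ∀ i, f i ∈ C := fun i => (C.orderIsoOfFin hT i).2
  have hsum : ∑ l ∈ C, #(rayPoints A l) ^ 2 = ∑ i, #(rayPoints A (f i)) ^ 2 := by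
    rw [← sum_coe_sort C, ← (C.orderIsoOfFin hT).toEquiv.sum_comp]
    rfl
  have hstep : ∀ i : Fin T, #(rayPoints A (f i.castSucc)) ^ 2 ≤
      2 * (#(rayPoints A (f i.castSucc)) * #(rayPoints A (f i.succ))) := by
    intro i
    have := hC _ (hfC i.castSucc) _ (hfC i.succ)
    rw [sq]
    nlinarith
  calc ∑ l ∈ C, #(rayPoints A l) ^ 2
      = ∑ i : Fin T, #(rayPoints A (f i.castSucc)) ^ 2 + #(rayPoints A (f (Fin.last T))) ^ 2 := by
        rw [hsum, Fin.sum_univ_castSucc]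
    _ ≤ 2 * ∑ i : Fin T, #(rayPoints A (f i.castSucc)) * #(rayPoints A (f i.succ)) + #A ^ 2 := by
        rw [mul_sum]
        gcongr with i
        · exact hstep i
        · exact rayPoints_subset ..
    _ ≤ 2 * #(A + A) ^ 2 + #A ^ 2 := by
        gcongr
        exact sum_card_rayPoints_mul_succ_le hA f hf

lemma Nat.le_two_mul_of_log_two_eq {a b : ℕ} (hb : b ≠ 0) (h : Nat.log 2 a = Nat.log 2 b) :
    a ≤ 2 * b := by
  have ha := Nat.lt_pow_succ_log_self one_lt_two a
  have hb := Nat.pow_log_le_self 2 hb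
  rw [h, pow_succ] at ha
  omega

lemma sum_card_rayPoints_sq_le (hA : ∀ a ∈ A, 0 < a) (h2 : 2 ≤ #A) :
    ∑ l ∈ A / A, #(rayPoints A l) ^ 2 ≤ 4 * Nat.clog 2 #A * #(A + A) ^ 2 := by
  set c := Nat.clog 2 #A
  have hc : 1 ≤ c := Nat.clog_pos one_lt_two h2
  have hne : A.Nonempty := card_pos.1 (by omega)
  have hAS : #A ≤ #(A + A) := card_le_card_add_left hne
  have hA₀ : 0 ∉ A := fun h => (hA 0 h).false
  have hmaps : ∀ l ∈ A / A, Nat.log 2 #(rayPoints A l) ∈ range (c + 1) := fun l _ =>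
    mem_range_succ_iff.2 <| (Nat.log_mono_right (card_le_card (rayPoints_subset A l))).trans
      (Nat.log_le_clog 2 #A)
  have hlow : ∀ k ∈ range c, ∑ l ∈ A / A with Nat.log 2 #(rayPoints A l) = k,
      #(rayPoints A l) ^ 2 ≤ 2 * #(A + A) ^ 2 + #A ^ 2 := by
    refine fun k _ => sum_card_rayPoints_sq_le_of_le_two_mul hA _ fun l hl l' hl' => ?_
    rw [mem_filter] at hl hl'
    exact Nat.le_two_mul_of_log_two_eq (rayPoints_nonempty hA₀ hl'.1).card_pos.ne'
      (hl.2.trans hl'.2.symm)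
  have htop : ∑ l ∈ A / A with Nat.log 2 #(rayPoints A l) = c, #(rayPoints A l) ^ 2 ≤ #A ^ 2 := by
    refine sum_card_rayPoints_sq_le_of_card_le hA hne _ fun l hl => ?_
    rw [mem_filter] at hl
    have hpow := Nat.pow_log_le_self 2 (rayPoints_nonempty hA₀ hl.1).card_pos.ne'
    rw [hl.2] at hpow
    exact (Nat.le_pow_clog one_lt_two #A).trans hpow
  rw [← sum_fiberwise_of_maps_to hmaps, sum_range_succ]
  calc _ ≤ c * (2 * #(A + A) ^ 2 + #A ^ 2) + #A ^ 2 := by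
        gcongr
        simpa using sum_le_sum hlow
    _ ≤ 4 * c * #(A + A) ^ 2 := by
        have := Nat.pow_le_pow_left hAS 2
        nlinarith

end Ordered

theorem stmt_0 (A : Finset ℝ) (hA : ∀ a ∈ A, 0 < a) (h2 : 2 ≤ A.card) :
    ((A * A).card : ℝ) * ((A + A).card : ℝ) ^ 2 ≥
      (A.card : ℝ) ^ 4 / (4 * (Nat.clog 2 A.card : ℝ)) := by
  have hnat : #A ^ 4 ≤ #(A * A) * (4 * Nat.clog 2 #A * #(A + A) ^ 2) :=
    calc #A ^ 4 = #A ^ 2 * #A ^ 2 := by ring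
      _ ≤ #(A * A) * Eₘ[A] := le_card_mul_mul_mulEnergy A A
      _ = #(A * A) * ∑ l ∈ A / A, #(rayPoints A l) ^ 2 := by
        rw [mulEnergy_eq_sum_card_rayPoints_sq fun h => (hA 0 h).false]
      _ ≤ #(A * A) * (4 * Nat.clog 2 #A * #(A + A) ^ 2) :=
        Nat.mul_le_mul_left _ (sum_card_rayPoints_sq_le hA h2)
  rw [ge_iff_le, div_le_iff₀ (mul_pos four_pos (mod_cast Nat.clog_pos one_lt_two h2))]
  have hreal : (#A : ℝ) ^ 4 ≤ #(A * A) * (4 * Nat.clog 2 #A * #(A + A) ^ 2) := by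
    exact_mod_cast hnat
  linarith
end

section
/- For any finite set A of positive real numbers, max(|A+A|, |AA|) ≥ |A|^{4/3} / (2·⌈log₂|A|⌉^{1/3}). -/
/-!
Solymosi's argument. Let `r(s)` be the number of pairs of `A × A` with ratio `s`, i.e. of points of
the grid `A × A` on the line of slope `s` through the origin. By Cauchy–Schwarz,
`|A|⁴ ≤ |AA| · E` with `E = ∑ r(s)²` the multiplicative energy. Sorting the slopes into
`⌈log₂ |A|⌉` classes on which `r` varies by a factor at most two, one class carries a
`1 / ⌈log₂ |A|⌉` share of `E`. For consecutive slopes `s < s'` of that class, adding a grid point on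
slope `s` to one on slope `s'` gives distinct points of `(A + A) × (A + A)` strictly between the two
lines, so the class carries at most `8 |A + A|²`. Hence `|A|⁴ ≤ 8 ⌈log₂ |A|⌉ · max(|A+A|, |AA|)³`.
-/

open Finset Pointwise
open scoped Combinatorics.Additive

theorem Finset.sum_card_fiber_sq {ι κ : Type*} [DecidableEq ι] [DecidableEq κ]
    (s : Finset ι) (f : ι → κ) :
    ∑ y ∈ s.image f, #{a ∈ s | f a = y} ^ 2 = #{p ∈ s ×ˢ s | f p.1 = f p.2} := by
  rw [card_eq_sum_card_fiberwise (f := fun p => f p.1) (t := s.image f)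
    fun p hp => mem_image_of_mem f (mem_product.1 (mem_filter.1 hp).1).1]
  refine sum_congr rfl fun y _ => ?_
  rw [sq, ← card_product, filter_filter]
  congr 1
  ext ⟨a, b⟩
  simp only [mem_filter, mem_product]
  constructor
  · rintro ⟨⟨ha, rfl⟩, hb, hab⟩
    exact ⟨⟨ha, hb⟩, hab.symm, rfl⟩
  · rintro ⟨⟨ha, hb⟩, hab, rfl⟩
    exact ⟨⟨ha, rfl⟩, hb, hab.symm⟩

-- The shift to `n - 1` is what makes `clog₂ n` classes, rather than `log₂ n + 1`, enough.
theorem Nat.log_div_lt_clog {n : ℕ} (hn : 2 ≤ n) (d : ℕ) :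
    Nat.log 2 ((n - 1) / d) < Nat.clog 2 n :=
  Nat.log_lt_of_lt_pow' (Nat.clog_pos one_lt_two hn).ne' <|
    calc (n - 1) / d ≤ n - 1 := Nat.div_le_self _ _
      _ < n := by omega
      _ ≤ 2 ^ Nat.clog 2 n := Nat.le_pow_clog one_lt_two n

theorem Nat.le_two_mul_of_log_div_eq {n d₁ d₂ : ℕ} (hd₁ : d₁ ≤ n) (hd₂ : 0 < d₂)
    (h : Nat.log 2 ((n - 1) / d₁) = Nat.log 2 ((n - 1) / d₂)) : d₁ ≤ 2 * d₂ := by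
  set k := Nat.log 2 ((n - 1) / d₂)
  have hup : n - 1 < 2 ^ (k + 1) * d₂ :=
    (Nat.div_lt_iff_lt_mul hd₂).1 (Nat.lt_pow_succ_log_self one_lt_two _)
  obtain h₀ | h₀ := eq_or_ne ((n - 1) / d₁) 0
  · rw [h₀, Nat.log_zero_right] at h
    rw [← h, zero_add, pow_one] at hup
    omega
  · have hlow : 2 ^ k * d₁ ≤ n - 1 :=
      (Nat.le_div_iff_mul_le (Nat.pos_of_ne_zero fun h' => by simp [h'] at h₀)).1
        (h ▸ Nat.pow_log_le_self 2 h₀)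
    rw [pow_succ, mul_assoc] at hup
    exact (Nat.lt_of_mul_lt_mul_left (hlow.trans_lt hup)).le

namespace Finset

section Field

variable {K : Type*} [Field K] [DecidableEq K] {A : Finset K} {s t : K} {p q : K × K}

-- `r(s) = #(divFiber A s)`; a pair `p` is the grid point with abscissa `p.2`.
def divFiber (A : Finset K) (s : K) : Finset (K × K) := {p ∈ A ×ˢ A | p.1 / p.2 = s}

theorem mem_divFiber : p ∈ divFiber A s ↔ (p.1 ∈ A ∧ p.2 ∈ A) ∧ p.1 / p.2 = s := by
  rw [divFiber, mem_filter, mem_product]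

theorem eq_mul_of_mem_divFiber (hA : ∀ a ∈ A, a ≠ 0) (hp : p ∈ divFiber A s) :
    p.1 = s * p.2 := by
  obtain ⟨⟨-, hp₂⟩, rfl⟩ := mem_divFiber.1 hp
  rw [div_mul_cancel₀ _ (hA _ hp₂)]

theorem card_divFiber_le (hA : ∀ a ∈ A, a ≠ 0) (s : K) : #(divFiber A s) ≤ #A :=
  card_le_card_of_injOn Prod.snd (fun p hp => (mem_divFiber.1 hp).1.2) fun p hp q hq h =>
    Prod.ext (by rw [eq_mul_of_mem_divFiber hA hp, eq_mul_of_mem_divFiber hA hq, h]) h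

theorem card_divFiber_pos (hs : s ∈ A / A) : 0 < #(divFiber A s) := by
  obtain ⟨a, ha, b, hb, rfl⟩ := mem_div.1 hs
  exact card_pos.2 ⟨(a, b), mem_divFiber.2 ⟨⟨ha, hb⟩, rfl⟩⟩

theorem mulEnergy_eq_sum_sq_card_divFiber (hA : ∀ a ∈ A, a ≠ 0) :
    Eₘ[A] = ∑ s ∈ A / A, #(divFiber A s) ^ 2 := by
  simp only [divFiber]
  rw [← image_div_product, sum_card_fiber_sq, mulEnergy]
  refine card_equiv ((Equiv.refl _).prodCongr (Equiv.prodComm _ _)) fun x => ?_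
  obtain ⟨⟨a, b⟩, c, d⟩ := x
  simp only [mem_filter, mem_product, Equiv.prodCongr_apply, Equiv.coe_refl, Prod.map,
    id, Equiv.prodComm_apply, Prod.swap]
  constructor
  · rintro ⟨⟨⟨ha, hb⟩, hc, hd⟩, h⟩
    refine ⟨⟨⟨ha, hb⟩, hd, hc⟩, ?_⟩
    rw [div_eq_div_iff (hA b hb) (hA c hc), h, mul_comm]
  · rintro ⟨⟨⟨ha, hb⟩, hd, hc⟩, h⟩
    refine ⟨⟨⟨ha, hb⟩, hc, hd⟩, ?_⟩
    rw [div_eq_div_iff (hA b hb) (hA c hc)] at h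
    rw [h, mul_comm]

theorem add_injOn_divFiber (hA : ∀ a ∈ A, a ≠ 0) (hst : s ≠ t) :
    Set.InjOn (fun x : (K × K) × (K × K) => x.1 + x.2) ↑(divFiber A s ×ˢ divFiber A t) := by
  rintro ⟨p, q⟩ hpq ⟨p', q'⟩ hpq' h
  simp only [mem_coe, mem_product] at hpq hpq'
  have hp := eq_mul_of_mem_divFiber hA hpq.1
  have hq := eq_mul_of_mem_divFiber hA hpq.2
  have hp' := eq_mul_of_mem_divFiber hA hpq'.1
  have hq' := eq_mul_of_mem_divFiber hA hpq'.2
  obtain ⟨h₁, h₂⟩ := Prod.ext_iff.1 h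
  simp only [Prod.fst_add, Prod.snd_add] at h₁ h₂
  have hq₂ : q.2 = q'.2 := mul_left_cancel₀ (sub_ne_zero.2 hst.symm) <| by
    linear_combination h₁ - hp - hq + hp' + hq' - s * h₂
  have hp₂ : p.2 = p'.2 := by linear_combination h₂ - hq₂
  exact Prod.ext (Prod.ext (by rw [hp, hp', hp₂]) hp₂) (Prod.ext (by rw [hq, hq', hq₂]) hq₂)

end Field

section LinearOrderedField

variable {K : Type*} [Field K] [LinearOrder K] [IsStrictOrderedRing K] {A : Finset K} {s t : K}
  {p q : K × K}

theorem div_add_mem_Ioo_of_mem_divFiber (hA : ∀ a ∈ A, 0 < a) (hst : s < t)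
    (hp : p ∈ divFiber A s) (hq : q ∈ divFiber A t) :
    (p + q).1 / (p + q).2 ∈ Set.Ioo s t := by
  have hA' : ∀ a ∈ A, a ≠ 0 := fun a ha => (hA a ha).ne'
  have hp₂ := hA _ (mem_divFiber.1 hp).1.2
  have hq₂ := hA _ (mem_divFiber.1 hq).1.2
  rw [Prod.fst_add, Prod.snd_add, eq_mul_of_mem_divFiber hA' hp, eq_mul_of_mem_divFiber hA' hq,
    Set.mem_Ioo, lt_div_iff₀ (by positivity), div_lt_iff₀ (by positivity)]
  constructor <;> nlinarith

theorem sum_card_divFiber_mul_le_card_add_sq (hA : ∀ a ∈ A, 0 < a) (C : Finset K)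
    (next : K → K) (h_lt : ∀ s ∈ C, s < next s) (h_sep : ∀ s ∈ C, ∀ t ∈ C, s < t → next s ≤ t) :
    ∑ s ∈ C, #(divFiber A s) * #(divFiber A (next s)) ≤ #(A + A) ^ 2 := by
  set S := C.sigma fun s => divFiber A s ×ˢ divFiber A (next s)
  have slope : ∀ x ∈ S, (x.2.1 + x.2.2).1 / (x.2.1 + x.2.2).2 ∈ Set.Ioo x.1 (next x.1) := by
    rintro ⟨s, p, q⟩ hx
    obtain ⟨hs, hp, hq⟩ := mem_sigma.1 hx |>.imp_right mem_product.1
    exact div_add_mem_Ioo_of_mem_divFiber hA (h_lt s hs) hp hq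
  calc ∑ s ∈ C, #(divFiber A s) * #(divFiber A (next s))
      = #S := by rw [card_sigma]; simp_rw [card_product]
    _ ≤ #((A + A) ×ˢ (A + A)) := by
      refine card_le_card_of_injOn (fun x => x.2.1 + x.2.2) ?_ ?_
      · rintro ⟨s, p, q⟩ hx
        obtain ⟨-, hp, hq⟩ := mem_sigma.1 hx |>.imp_right mem_product.1
        obtain ⟨⟨hp₁, hp₂⟩, -⟩ := mem_divFiber.1 hp
        obtain ⟨⟨hq₁, hq₂⟩, -⟩ := mem_divFiber.1 hq
        exact mem_product.2 ⟨add_mem_add hp₁ hq₁, add_mem_add hp₂ hq₂⟩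
      · rintro ⟨s, p, q⟩ hx ⟨t, p', q'⟩ hy h
        have hsx := slope _ hx
        have hty := slope _ hy
        simp only at h hsx hty
        rw [h] at hsx
        obtain ⟨hs, hpq⟩ := mem_sigma.1 hx
        obtain ⟨ht, hpq'⟩ := mem_sigma.1 hy
        obtain rfl : s = t := by
          by_contra hne
          rcases lt_or_gt_of_ne hne with hst | hts
          · linarith [h_sep s hs t ht hst, hsx.2, hty.1]
          · linarith [h_sep t ht s hs hts, hsx.1, hty.2]
        have : (p, q) = (p', q') :=
          add_injOn_divFiber (fun a ha => (hA a ha).ne') (h_lt s hs).ne hpq hpq' h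
        rw [this]
    _ = #(A + A) ^ 2 := by rw [card_product, sq]

theorem sum_sq_card_divFiber_le_of_le_two_mul (hA : ∀ a ∈ A, 0 < a) (C : Finset K)
    (hC : ∀ s ∈ C, ∀ t ∈ C, #(divFiber A s) ≤ 2 * #(divFiber A t)) :
    ∑ s ∈ C, #(divFiber A s) ^ 2 ≤ 8 * #(A + A) ^ 2 := by
  obtain hC₁ | hC₂ := le_or_gt #C 1
  · have hA_le : #A ≤ #(A + A) := by
      obtain rfl | hA₀ := A.eq_empty_or_nonempty
      · simp
      · exact card_le_card_add_left hA₀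
    calc ∑ s ∈ C, #(divFiber A s) ^ 2 ≤ #C • #(A + A) ^ 2 := by
          refine sum_le_card_nsmul _ _ _ fun s _ => ?_
          gcongr
          exact (card_divFiber_le (fun a ha => (hA a ha).ne') s).trans hA_le
      _ ≤ 8 * #(A + A) ^ 2 := by rw [smul_eq_mul]; gcongr; omega
  have hne : C.Nonempty := card_pos.1 (by omega)
  obtain ⟨s₀, hs₀, hmin⟩ := C.exists_min_image (fun s => #(divFiber A s)) hne
  set Δ := #(divFiber A s₀)
  choose! next hnext_mem hnext_lt hnext_le using fun s (hs : s ∈ C.erase (C.max' hne)) =>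
    exists_next_right ⟨C.max' hne, C.max'_mem hne,
      lt_of_le_of_ne (C.le_max' s (mem_of_mem_erase hs)) (ne_of_mem_erase hs)⟩
  have hgeom := sum_card_divFiber_mul_le_card_add_sq hA (C.erase (C.max' hne)) next hnext_lt
    fun s hs t ht hst => hnext_le s hs t (mem_of_mem_erase ht) hst
  calc ∑ s ∈ C, #(divFiber A s) ^ 2 ≤ #C • (2 * Δ) ^ 2 :=
        sum_le_card_nsmul _ _ _ fun s hs => by gcongr; exact hC s hs s₀ hs₀
    _ ≤ 8 * ((#C - 1) * (Δ * Δ)) := by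
        have : #C ≤ 2 * (#C - 1) := by omega
        rw [smul_eq_mul]
        nlinarith
    _ = 8 * ∑ s ∈ C.erase (C.max' hne), Δ * Δ := by
        rw [sum_const, card_erase_of_mem (C.max'_mem hne), smul_eq_mul]
    _ ≤ 8 * ∑ s ∈ C.erase (C.max' hne), #(divFiber A s) * #(divFiber A (next s)) := by
        gcongr with s hs
        · exact hmin s (mem_of_mem_erase hs)
        · exact hmin _ (hnext_mem s hs)
    _ ≤ 8 * #(A + A) ^ 2 := by gcongr

theorem sum_sq_card_divFiber_le (hA : ∀ a ∈ A, 0 < a) (hA₂ : 2 ≤ #A) :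
    ∑ s ∈ A / A, #(divFiber A s) ^ 2 ≤ 8 * Nat.clog 2 #A * #(A + A) ^ 2 := by
  set L := Nat.clog 2 #A
  obtain ⟨k, -, hk⟩ := exists_le_sum_fiber_of_maps_to_of_nsmul_le_sum
    (s := A / A) (t := range L) (f := fun s => Nat.log 2 ((#A - 1) / #(divFiber A s)))
    (w := fun s => L * #(divFiber A s) ^ 2) (b := ∑ s ∈ A / A, #(divFiber A s) ^ 2)
    (fun s _ => mem_range.2 (Nat.log_div_lt_clog hA₂ _))
    (nonempty_range_iff.2 (Nat.clog_pos one_lt_two hA₂).ne')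
    (by rw [card_range, smul_eq_mul, mul_sum])
  calc ∑ s ∈ A / A, #(divFiber A s) ^ 2
      ≤ L * ∑ s ∈ A / A with Nat.log 2 ((#A - 1) / #(divFiber A s)) = k, #(divFiber A s) ^ 2 := by
        rwa [mul_sum]
    _ ≤ L * (8 * #(A + A) ^ 2) := by
        gcongr
        refine sum_sq_card_divFiber_le_of_le_two_mul hA _ fun s hs t ht => ?_
        rw [mem_filter] at hs ht
        exact Nat.le_two_mul_of_log_div_eq (card_divFiber_le (fun a ha => (hA a ha).ne') s)
          (card_divFiber_pos ht.1) (hs.2.trans ht.2.symm)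
    _ = 8 * L * #(A + A) ^ 2 := by ring

end LinearOrderedField

end Finset

theorem Real.rpow_four_thirds_div_le_of_pow_four_le {x y L : ℝ} (hx : 0 ≤ x) (hy : 0 ≤ y)
    (hL : 0 < L) (h : x ^ 4 ≤ 8 * L * y ^ 3) :
    x ^ ((4 : ℝ) / 3) / (2 * L ^ ((1 : ℝ) / 3)) ≤ y := by
  refine le_of_pow_le_pow_left₀ three_ne_zero hy ?_
  have hcube : ∀ {z : ℝ} {e : ℝ}, 0 ≤ z → (z ^ e) ^ 3 = z ^ (e * 3) := fun hz => by
    rw [← Real.rpow_natCast, ← Real.rpow_mul hz, Nat.cast_ofNat]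
  rw [div_pow, mul_pow, hcube hx, hcube hL.le, div_le_iff₀ (by positivity)]
  norm_num
  linarith

theorem stmt_1 (A : Finset ℝ) (hA : ∀ a ∈ A, 0 < a) (h2 : 2 ≤ A.card) :
    max ((A + A).card : ℝ) ((A * A).card : ℝ) ≥
      (A.card : ℝ) ^ ((4 : ℝ) / 3) / (2 * (Nat.clog 2 A.card : ℝ) ^ ((1 : ℝ) / 3)) := by
  set L := Nat.clog 2 #A
  set M := max (#(A + A) : ℝ) (#(A * A) : ℝ)
  have hcount : #A ^ 4 ≤ #(A * A) * (8 * L * #(A + A) ^ 2) :=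
    calc #A ^ 4 = #A ^ 2 * #A ^ 2 := by ring
      _ ≤ #(A * A) * Eₘ[A] := le_card_mul_mul_mulEnergy A A
      _ = #(A * A) * ∑ s ∈ A / A, #(divFiber A s) ^ 2 := by
        rw [mulEnergy_eq_sum_sq_card_divFiber fun a ha => (hA a ha).ne']
      _ ≤ #(A * A) * (8 * L * #(A + A) ^ 2) := by gcongr; exact sum_sq_card_divFiber_le hA h2
  refine Real.rpow_four_thirds_div_le_of_pow_four_le (by positivity) (by positivity)
    (by exact_mod_cast Nat.clog_pos one_lt_two h2) ?_
  calc (#A : ℝ) ^ 4 ≤ #(A * A) * (8 * L * #(A + A) ^ 2) := by exact_mod_cast hcount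
    _ ≤ M * (8 * L * M ^ 2) := by gcongr; exacts [le_max_right _ _, le_max_left _ _]
    _ = 8 * L * M ^ 3 := by ring
end

section
/- For any finite set A of positive real numbers, E(A) ≤ 4·⌈log₂|A|⌉·|A+A|², where E(A) is the multiplicative energy of A. -/
open Finset Pointwise

namespace Solymosi

/-- pairs (a,b) ∈ A×A with a = l*b, i.e. slope a/b = l -/
noncomputable def F (A : Finset ℝ) (l : ℝ) : Finset (ℝ × ℝ) :=
  (A ×ˢ A).filter (fun q => q.1 = l * q.2)

noncomputable def m (A : Finset ℝ) (l : ℝ) : ℕ := (F A l).card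

lemma mem_F {A : Finset ℝ} {l : ℝ} {p : ℝ × ℝ} :
    p ∈ F A l ↔ p.1 ∈ A ∧ p.2 ∈ A ∧ p.1 = l * p.2 := by
  simp [F, mem_filter, and_assoc]

lemma m_le (A : Finset ℝ) (l : ℝ) : m A l ≤ A.card := by
  apply Finset.card_le_card_of_injOn (fun q => q.2)
  · intro q hq; exact (mem_F.1 hq).2.1
  · intro q hq r hr h
    rw [mem_coe, mem_F] at hq hr
    have h2 : q.2 = r.2 := h
    exact Prod.ext (by rw [hq.2.2, hr.2.2, h2]) h2

/-- sums of a point of slope l and a point of slope mu -/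
noncomputable def Q (A : Finset ℝ) (l mu : ℝ) : Finset (ℝ × ℝ) :=
  ((F A l) ×ˢ (F A mu)).image (fun p => p.1 + p.2)

lemma card_Q (A : Finset ℝ) {l mu : ℝ} (h : l ≠ mu) :
    (Q A l mu).card = m A l * m A mu := by
  have hinj : Set.InjOn (fun p : (ℝ × ℝ) × (ℝ × ℝ) => p.1 + p.2)
      (((F A l) ×ˢ (F A mu) : Finset ((ℝ × ℝ) × (ℝ × ℝ))) : Set ((ℝ × ℝ) × (ℝ × ℝ))) := by
    intro p hp q hq hpq
    rw [mem_coe, mem_product] at hp hq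
    obtain ⟨hp1, hp2⟩ := hp; obtain ⟨hq1, hq2⟩ := hq
    rw [mem_F] at hp1 hp2 hq1 hq2
    have e1 : p.1.1 + p.2.1 = q.1.1 + q.2.1 := congrArg Prod.fst hpq
    have e2 : p.1.2 + p.2.2 = q.1.2 + q.2.2 := congrArg Prod.snd hpq
    rw [hp1.2.2, hp2.2.2, hq1.2.2, hq2.2.2] at e1
    have hb : p.1.2 = q.1.2 := by
      have h4 : (l - mu) * (p.1.2 - q.1.2) = 0 := by linear_combination e1 - mu * e2
      rcases mul_eq_zero.1 h4 with h' | h'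
      · exact absurd (by linarith : l = mu) h
      · linarith
    have hd : p.2.2 = q.2.2 := by linarith
    refine Prod.ext (Prod.ext ?_ hb) (Prod.ext ?_ hd)
    · rw [hp1.2.2, hq1.2.2, hb]
    · rw [hp2.2.2, hq2.2.2, hd]
  rw [Q, Finset.card_image_of_injOn hinj, card_product]
  rfl

lemma Q_subset (A : Finset ℝ) (l mu : ℝ) : Q A l mu ⊆ (A + A) ×ˢ (A + A) := by
  intro p hp
  simp only [Q, mem_image] at hp
  obtain ⟨q, hq, rfl⟩ := hp
  rw [mem_product] at hq
  have h1 := mem_F.1 hq.1; have h2 := mem_F.1 hq.2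
  rw [mem_product]
  exact ⟨add_mem_add h1.1 h2.1, add_mem_add h1.2.1 h2.2.1⟩

lemma Q_slope {A : Finset ℝ} (hA : ∀ a ∈ A, 0 < a) {l mu : ℝ} (hlm : l < mu)
    {p : ℝ × ℝ} (hp : p ∈ Q A l mu) :
    0 < p.2 ∧ l * p.2 < p.1 ∧ p.1 < mu * p.2 := by
  simp only [Q, mem_image] at hp
  obtain ⟨q, hq, rfl⟩ := hp
  rw [mem_product] at hq
  have h1 := mem_F.1 hq.1; have h2 := mem_F.1 hq.2
  have hb := hA _ h1.2.1
  have hd := hA _ h2.2.1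
  have e1 := h1.2.2; have e2 := h2.2.2
  refine ⟨?_, ?_, ?_⟩ <;> simp only [Prod.fst_add, Prod.snd_add] <;> nlinarith

lemma Q_disjoint {A : Finset ℝ} (hA : ∀ a ∈ A, 0 < a) {l1 mu1 l2 mu2 : ℝ}
    (h1 : l1 < mu1) (h2 : l2 < mu2) (h12 : mu1 ≤ l2) :
    Disjoint (Q A l1 mu1) (Q A l2 mu2) := by
  rw [Finset.disjoint_left]
  intro p hp1 hp2
  obtain ⟨hz, ha, hb⟩ := Q_slope hA h1 hp1
  obtain ⟨-, hc, hd⟩ := Q_slope hA h2 hp2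
  nlinarith

/-- key geometric bound: within a "dyadic class" C, the sum of m² is controlled -/
lemma class_bound {A : Finset ℝ} (hA : ∀ a ∈ A, 0 < a) (C : Finset ℝ)
    (hdbl : ∀ l ∈ C, ∀ mu ∈ C, m A mu ≤ 2 * m A l) :
    ∑ l ∈ C, (m A l) ^ 2 ≤ A.card ^ 2 + 2 * (A + A).card ^ 2 := by
  rcases C.eq_empty_or_nonempty with rfl | hne
  · simp
  set x0 := C.min' hne with hx0
  classical
  set pred : ℝ → ℝ := fun mu =>
    if h : (C.filter (· < mu)).Nonempty then (C.filter (· < mu)).max' h else 0 with hpred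
  have hfacts : ∀ mu ∈ C.erase x0, pred mu ∈ C ∧ pred mu < mu ∧
      ∀ v ∈ C, v < mu → v ≤ pred mu := by
    intro mu hmu
    rw [mem_erase] at hmu
    have hx0lt : x0 < mu := lt_of_le_of_ne (C.min'_le mu hmu.2) (Ne.symm hmu.1)
    have hnef : (C.filter (· < mu)).Nonempty :=
      ⟨x0, mem_filter.2 ⟨C.min'_mem hne, hx0lt⟩⟩
    have hpmu : pred mu = (C.filter (· < mu)).max' hnef := by
      simp only [hpred, dif_pos hnef]
    have hmem := (C.filter (· < mu)).max'_mem hnef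
    rw [← hpmu, mem_filter] at hmem
    refine ⟨hmem.1, hmem.2, ?_⟩
    intro v hv hvlt
    rw [hpmu]
    exact Finset.le_max' (C.filter (· < mu)) v (mem_filter.2 ⟨hv, hvlt⟩)
  have hsplit : ∑ l ∈ C.erase x0, (m A l)^2 + (m A x0)^2 = ∑ l ∈ C, (m A l)^2 :=
    Finset.sum_erase_add C _ (C.min'_mem hne)
  have h0 : (m A x0)^2 ≤ A.card ^ 2 := Nat.pow_le_pow_left (m_le A x0) 2
  have hstep : ∑ l ∈ C.erase x0, (m A l)^2 ≤
      2 * ∑ mu ∈ C.erase x0, m A (pred mu) * m A mu := by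
    rw [Finset.mul_sum]
    apply Finset.sum_le_sum
    intro mu hmu
    obtain ⟨hpC, hplt, -⟩ := hfacts mu hmu
    have := hdbl (pred mu) hpC mu (Finset.mem_of_mem_erase hmu)
    calc (m A mu)^2 = m A mu * m A mu := sq (m A mu)
      _ ≤ (2 * m A (pred mu)) * m A mu := Nat.mul_le_mul_right _ this
      _ = 2 * (m A (pred mu) * m A mu) := by ring
  have hgeo : ∑ mu ∈ C.erase x0, m A (pred mu) * m A mu ≤ (A + A).card ^ 2 := by
    have hcards : ∀ mu ∈ C.erase x0, m A (pred mu) * m A mu = (Q A (pred mu) mu).card := by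
      intro mu hmu
      exact (card_Q A (ne_of_lt (hfacts mu hmu).2.1)).symm
    rw [Finset.sum_congr rfl hcards]
    have hdisj : ∀ mu1 ∈ C.erase x0, ∀ mu2 ∈ C.erase x0, mu1 ≠ mu2 →
        Disjoint (Q A (pred mu1) mu1) (Q A (pred mu2) mu2) := by
      intro mu1 h1 mu2 h2 hne12
      obtain ⟨hp1C, hp1lt, hmax1⟩ := hfacts mu1 h1
      obtain ⟨hp2C, hp2lt, hmax2⟩ := hfacts mu2 h2
      rcases lt_or_gt_of_ne hne12 with h | h
      · exact Q_disjoint hA hp1lt hp2lt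
          (hmax2 mu1 (Finset.mem_of_mem_erase h1) h)
      · exact (Q_disjoint hA hp2lt hp1lt
          (hmax1 mu2 (Finset.mem_of_mem_erase h2) h)).symm
    rw [← Finset.card_biUnion hdisj]
    calc ((C.erase x0).biUnion fun mu => Q A (pred mu) mu).card
        ≤ ((A + A) ×ˢ (A + A)).card := by
          apply Finset.card_le_card
          intro p hp
          rw [Finset.mem_biUnion] at hp
          obtain ⟨mu, -, hp⟩ := hp
          exact Q_subset A _ _ hp
      _ = (A + A).card ^ 2 := by rw [card_product, sq]
  omega


/-- the ratio set -/
noncomputable def R (A : Finset ℝ) : Finset ℝ := (A ×ˢ A).image (fun q => q.1 / q.2)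

lemma one_le_m {A : Finset ℝ} (hA : ∀ a ∈ A, 0 < a) {l : ℝ} (hl : l ∈ R A) :
    1 ≤ m A l := by
  rw [R, mem_image] at hl
  obtain ⟨q, hq, rfl⟩ := hl
  rw [mem_product] at hq
  have hb := hA _ hq.2
  have : q ∈ F A (q.1 / q.2) :=
    mem_F.2 ⟨hq.1, hq.2, by field_simp⟩
  exact Finset.card_pos.2 ⟨q, this⟩

/-- energy as a sum of squares over the ratio set -/
lemma energy_eq {A : Finset ℝ} (hA : ∀ a ∈ A, 0 < a) :
    ((((A ×ˢ A) ×ˢ (A ×ˢ A)).filter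
        (fun p => p.1.1 * p.2.2 = p.1.2 * p.2.1)).card) =
      ∑ l ∈ R A, (m A l) ^ 2 := by
  classical
  set T := (((A ×ˢ A) ×ˢ (A ×ˢ A)).filter
      (fun p => p.1.1 * p.2.2 = p.1.2 * p.2.1)) with hT
  have hmaps : ∀ p ∈ T, (fun p : (ℝ × ℝ) × (ℝ × ℝ) => p.1.1 / p.1.2) p ∈ R A := by
    intro p hp
    rw [hT, mem_filter, mem_product] at hp
    exact mem_image.2 ⟨p.1, hp.1.1, rfl⟩
  rw [Finset.card_eq_sum_card_fiberwise hmaps]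
  apply Finset.sum_congr rfl
  intro l hl
  have hfib : T.filter (fun p => p.1.1 / p.1.2 = l) = (F A l) ×ˢ (F A l) := by
    ext p
    simp only [hT, mem_filter, mem_product, mem_F]
    constructor
    · rintro ⟨⟨⟨⟨ha, hb⟩, hc, hd⟩, heq⟩, hdiv⟩
      have hb0 := (hA _ hb).ne'
      have hd0 := (hA _ hd).ne'
      have h1 : p.1.1 = l * p.1.2 := by
        field_simp at hdiv; linarith [hdiv]
      have h2 : p.2.1 = l * p.2.2 := by
        apply mul_left_cancel₀ hb0
        rw [← heq, h1]; ring
      exact ⟨⟨ha, hb, h1⟩, hc, hd, h2⟩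
    · rintro ⟨⟨ha, hb, h1⟩, hc, hd, h2⟩
      have hb0 := (hA _ hb).ne'
      refine ⟨⟨⟨⟨ha, hb⟩, hc, hd⟩, by rw [h1, h2]; ring⟩, ?_⟩
      rw [h1]; field_simp
  rw [hfib, card_product, sq]
  rfl

theorem main (A : Finset ℝ) (hA : ∀ a ∈ A, 0 < a) (h2 : 2 ≤ A.card) :
    ((((A ×ˢ A) ×ˢ (A ×ˢ A)).filter
        (fun p => p.1.1 * p.2.2 = p.1.2 * p.2.1)).card : ℝ) ≤
      4 * (Nat.clog 2 A.card : ℝ) * ((A + A).card : ℝ) ^ 2 := by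
  classical
  set n := A.card with hn
  set L := Nat.clog 2 n with hL
  set S := (A + A).card with hS
  have hL1 : 1 ≤ L := Nat.clog_pos one_lt_two h2
  have hnL : n ≤ 2 ^ L := Nat.le_pow_clog one_lt_two n
  have hnS : n ≤ S := by
    have hAne : A.Nonempty := Finset.card_pos.1 (by omega)
    exact Finset.card_le_card_add_left hAne
  set cls : ℝ → ℕ := fun l => min (Nat.log 2 (m A l)) (L - 1) with hcls
  -- the doubling property within a class
  have hdbl : ∀ j : ℕ, ∀ l ∈ (R A).filter (fun l => cls l = j),
      ∀ mu ∈ (R A).filter (fun l => cls l = j), m A mu ≤ 2 * m A l := by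
    intro j l hl mu hmu
    rw [mem_filter] at hl hmu
    have hml : 1 ≤ m A l := one_le_m hA hl.1
    have hjl : j ≤ Nat.log 2 (m A l) := hl.2 ▸ min_le_left _ _
    have hpow : 2 ^ j ≤ m A l :=
      le_trans (Nat.pow_le_pow_right (by norm_num) hjl)
        (Nat.pow_log_le_self 2 (by omega))
    rcases lt_or_ge j (L - 1) with hcase | hcase
    · -- then Nat.log 2 (m A mu) = j, so m A mu < 2^(j+1)
      have hlogmu : Nat.log 2 (m A mu) = j := by
        have h5 := hmu.2
        rw [hcls] at h5
        simp only [min_def] at h5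
        split_ifs at h5 <;> omega
      have := Nat.lt_pow_succ_log_self (b := 2) (by norm_num) (m A mu)
      rw [hlogmu] at this
      have : m A mu < 2 ^ (j + 1) := this
      rw [pow_succ] at this
      omega
    · -- top class: j = L - 1, use m A mu ≤ n ≤ 2^L
      have hj : j = L - 1 := by
        have h5 := hl.2; rw [hcls] at h5
        simp only [min_def] at h5
        split_ifs at h5 <;> omega
      have h1 : m A mu ≤ n := m_le A mu
      have h2' : 2 ^ L = 2 * 2 ^ (L - 1) := by
        rw [← pow_succ']
        congr 1
        omega
      have h3 : 2 ^ (L - 1) ≤ m A l := by rw [← hj]; exact hpow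
      omega
  -- decompose the energy by classes
  have hclsmem : ∀ l ∈ R A, cls l ∈ Finset.range L := by
    intro l _
    rw [mem_range, hcls]
    exact lt_of_le_of_lt (min_le_right _ _) (by omega)
  have hfib := Finset.sum_fiberwise_of_maps_to hclsmem (fun l => (m A l) ^ 2)
  have hnat : (((A ×ˢ A) ×ˢ (A ×ˢ A)).filter
        (fun p => p.1.1 * p.2.2 = p.1.2 * p.2.1)).card ≤ 3 * L * S ^ 2 := by
    rw [energy_eq hA, ← hfib]
    calc ∑ j ∈ Finset.range L, ∑ l ∈ (R A).filter (fun l => cls l = j), (m A l) ^ 2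
        ≤ ∑ j ∈ Finset.range L, (n ^ 2 + 2 * S ^ 2) := by
          apply Finset.sum_le_sum
          intro j _
          exact class_bound hA _ (fun l hl mu hmu => hdbl j l hl mu hmu)
      _ = L * (n ^ 2 + 2 * S ^ 2) := by rw [Finset.sum_const, card_range, smul_eq_mul]
      _ ≤ L * (S ^ 2 + 2 * S ^ 2) := by
          apply Nat.mul_le_mul_left
          have : n ^ 2 ≤ S ^ 2 := Nat.pow_le_pow_left hnS 2
          omega
      _ = 3 * L * S ^ 2 := by ring
  calc ((((A ×ˢ A) ×ˢ (A ×ˢ A)).filter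
        (fun p => p.1.1 * p.2.2 = p.1.2 * p.2.1)).card : ℝ)
      ≤ ((3 * L * S ^ 2 : ℕ) : ℝ) := by exact_mod_cast hnat
    _ ≤ 4 * (L : ℝ) * (S : ℝ) ^ 2 := by
        push_cast
        nlinarith [mul_nonneg (Nat.cast_nonneg L) (sq_nonneg (S : ℝ))]

end Solymosi

open Solymosi

theorem stmt_2 (A : Finset ℝ) (hA : ∀ a ∈ A, 0 < a) (h2 : 2 ≤ A.card) :
    ((((A ×ˢ A) ×ˢ (A ×ˢ A)).filter
        (fun p => p.1.1 * p.2.2 = p.1.2 * p.2.1)).card : ℝ) ≤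
      4 * (Nat.clog 2 A.card : ℝ) * ((A + A).card : ℝ) ^ 2 :=
  Solymosi.main A hA h2
end

section
/- Let A and B be finite sets of positive reals with |A| ≥ |B| ≥ 2. Then |A|²|B|² / |AB| ≤ 4·⌈log₂|B|⌉·|A+A|·|B+B|. -/
/-! Solymosi's argument. Let `d(l)` be the number of points of `B × A` on the line `y = l x`.
Cauchy–Schwarz gives `|A|²|B|² ≤ |AB| E`, and the multiplicative energy is `E = ∑ d(l)²`.
Split the slopes into `⌈log₂ |B|⌉` classes on each of which `d` varies by a factor at most 2.
For slopes `m < l`, the sums `P + Q` with `P` on the line of slope `m` and `Q` on that of slope `l`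
are `d(m) d(l)` distinct points of `(B + B) × (A + A)` strictly between the two lines, so summing
`d(m) d(l)` over consecutive slopes of a class gives at most `|A + A| |B + B|`; within a class this
bounds `∑ d(l)²` by `3 |A + A| |B + B|`. -/

open Finset Pointwise

open scoped Combinatorics.Additive

theorem Finset.sum_sq_le_of_le_two_mul {α : Type*} [LinearOrder α] {d N : α → ℕ}
    (hN : ∀ m l, m < l → N m + d m * d l ≤ N l) {T : Finset α}
    (hd : ∀ l ∈ T, ∀ m ∈ T, d l ≤ 2 * d m) :
    ∀ M ∈ T, (∀ l ∈ T, l ≤ M) → ∑ l ∈ T, d l ^ 2 ≤ d M ^ 2 + 2 * N M := by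
  induction T using Finset.induction_on_max with
  | empty => simp
  | insert a s has ih =>
    intro M hM hMmax
    obtain rfl : M = a := by
      rcases mem_insert.1 hM with rfl | hMs
      · rfl
      · exact absurd (hMmax a (mem_insert_self a s)) (has M hMs).not_ge
    rw [sum_insert fun has' => (has M has').false]
    rcases s.eq_empty_or_nonempty with rfl | hs
    · simp
    have hm := s.max'_mem hs
    have hs_sum := ih (fun l hl m hm => hd l (mem_insert_of_mem hl) m (mem_insert_of_mem hm))
      _ hm fun l hl => s.le_max' l hl
    have hstep := hN _ _ (has _ hm)
    have hratio := hd _ (mem_insert_of_mem hm) M (mem_insert_self M s)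
    nlinarith

section

variable (A B : Finset ℝ)

noncomputable def linePoints (l : ℝ) : Finset (ℝ × ℝ) := {p ∈ B ×ˢ A | p.2 = l * p.1}

noncomputable def slopes : Finset ℝ := (B ×ˢ A).image fun p => p.2 / p.1

noncomputable def belowLine (θ : ℝ) : Finset (ℝ × ℝ) :=
  {p ∈ (B + B) ×ˢ (A + A) | p.2 < θ * p.1}

variable {A B}

lemma card_linePoints_le (l : ℝ) : #(linePoints A B l) ≤ #B :=
  card_le_card_of_injOn Prod.fst (fun _ hp => (mem_product.1 (mem_filter.1 hp).1).1)
    fun p hp q hq hpq => Prod.ext hpq (by rw [(mem_filter.1 hp).2, (mem_filter.1 hq).2, hpq])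

lemma card_belowLine_le (θ : ℝ) : #(belowLine A B θ) ≤ #(A + A) * #(B + B) := by
  rw [mul_comm, ← card_product]
  exact card_filter_le _ _

lemma pos_of_mem_add (hB : ∀ b ∈ B, 0 < b) {x : ℝ} (hx : x ∈ B + B) : 0 < x := by
  obtain ⟨b, hb, c, hc, rfl⟩ := mem_add.1 hx
  exact add_pos (hB b hb) (hB c hc)

lemma belowLine_mono (hB : ∀ b ∈ B, 0 < b) {m l : ℝ} (hml : m ≤ l) :
    belowLine A B m ⊆ belowLine A B l := by
  intro p hp
  simp only [belowLine, mem_filter, mem_product] at hp ⊢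
  have := pos_of_mem_add hB hp.1.1
  exact ⟨hp.1, by nlinarith⟩

lemma add_mem_belowLine_sdiff (hB : ∀ b ∈ B, 0 < b) {m l : ℝ} (hml : m < l) {p q : ℝ × ℝ}
    (hp : p ∈ linePoints A B m) (hq : q ∈ linePoints A B l) :
    p + q ∈ belowLine A B l \ belowLine A B m := by
  simp only [linePoints, mem_filter, mem_product] at hp hq
  obtain ⟨⟨hp1, hp2⟩, hpl⟩ := hp
  obtain ⟨⟨hq1, hq2⟩, hql⟩ := hq
  have := hB _ hp1
  have := hB _ hq1
  simp only [belowLine, mem_sdiff, mem_filter, mem_product, Prod.fst_add, Prod.snd_add, not_and,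
    not_lt]
  exact ⟨⟨⟨add_mem_add hp1 hq1, add_mem_add hp2 hq2⟩, by nlinarith⟩, fun _ => by nlinarith⟩

lemma card_linePoints_add {m l : ℝ} (hml : m ≠ l) :
    #(linePoints A B m + linePoints A B l) = #(linePoints A B m) * #(linePoints A B l) := by
  refine card_add_iff.2 ?_
  rintro ⟨p, q⟩ hpq ⟨p', q'⟩ hpq' h
  simp only [Set.mem_prod, linePoints, coe_filter, Set.mem_ofPred_eq] at hpq hpq' h
  have h1 : p.1 + q.1 = p'.1 + q'.1 := congrArg Prod.fst h
  have h2 : p.2 + q.2 = p'.2 + q'.2 := congrArg Prod.snd h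
  have hq : q.1 = q'.1 := mul_left_cancel₀ (sub_ne_zero.2 hml.symm) <| by
    linear_combination h2 - m * h1 - hpq.1.2 - hpq.2.2 + hpq'.1.2 + hpq'.2.2
  have hp : p.1 = p'.1 := by linarith
  have hp2 : p.2 = p'.2 := by rw [hpq.1.2, hpq'.1.2, hp]
  have hq2 : q.2 = q'.2 := by rw [hpq.2.2, hpq'.2.2, hq]
  simp [Prod.ext hp hp2, Prod.ext hq hq2]

lemma card_belowLine_add_mul_le (hB : ∀ b ∈ B, 0 < b) {m l : ℝ} (hml : m < l) :
    #(belowLine A B m) + #(linePoints A B m) * #(linePoints A B l) ≤ #(belowLine A B l) := by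
  have hsum : linePoints A B m + linePoints A B l ⊆ belowLine A B l \ belowLine A B m := by
    intro x hx
    obtain ⟨p, hp, q, hq, rfl⟩ := mem_add.1 hx
    exact add_mem_belowLine_sdiff hB hml hp hq
  rw [← card_linePoints_add hml.ne, ← card_sdiff_add_card_eq_card (belowLine_mono hB hml.le)]
  have := card_le_card hsum
  omega

lemma mem_linePoints_iff_div_eq (hB : ∀ b ∈ B, 0 < b) {l : ℝ} {p : ℝ × ℝ} (hp : p ∈ B ×ˢ A) :
    p ∈ linePoints A B l ↔ p.2 / p.1 = l := by
  rw [linePoints, mem_filter, div_eq_iff (hB _ (mem_product.1 hp).1).ne']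
  exact and_iff_right hp

lemma mulEnergy_eq_sum_sq_card_linePoints (hB : ∀ b ∈ B, 0 < b) :
    Eₘ[A, B] = ∑ l ∈ slopes A B, #(linePoints A B l) ^ 2 := by
  -- `a * b = a' * b'` iff the points `(b', a)` and `(b, a')` have the same slope.
  have hcollinear : Eₘ[A, B] = #{x ∈ (B ×ˢ A) ×ˢ (B ×ˢ A) | x.1.2 / x.1.1 = x.2.2 / x.2.1} := by
    refine card_nbij' (fun x => ((x.2.2, x.1.1), (x.2.1, x.1.2)))
      (fun y => ((y.1.2, y.2.2), (y.2.1, y.1.1))) ?_ ?_ (fun _ _ => rfl) (fun _ _ => rfl)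
    · rintro ⟨⟨a, a'⟩, ⟨b, b'⟩⟩ hx
      simp only [coe_filter, mem_product, Set.mem_ofPred_eq] at hx ⊢
      rw [div_eq_div_iff (hB _ hx.1.2.2).ne' (hB _ hx.1.2.1).ne']
      exact ⟨⟨⟨hx.1.2.2, hx.1.1.1⟩, hx.1.2.1, hx.1.1.2⟩, hx.2⟩
    · rintro ⟨⟨b', a⟩, ⟨b, a'⟩⟩ hy
      simp only [coe_filter, mem_product, Set.mem_ofPred_eq] at hy ⊢
      rw [div_eq_div_iff (hB _ hy.1.1.1).ne' (hB _ hy.1.2.1).ne'] at hy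
      exact ⟨⟨⟨hy.1.1.2, hy.1.2.2⟩, hy.1.2.1, hy.1.1.1⟩, hy.2⟩
  rw [hcollinear, card_eq_sum_card_fiberwise (f := fun x => x.1.2 / x.1.1) (t := slopes A B)
    fun x hx => mem_image_of_mem _ (mem_product.1 (mem_filter.1 hx).1).1]
  refine sum_congr rfl fun l _ => ?_
  rw [sq, ← card_product]
  congr 1
  ext ⟨p, q⟩
  simp only [mem_filter, mem_product (p := (p, q))]
  constructor
  · rintro ⟨⟨⟨hp, hq⟩, hpq⟩, hl⟩
    exact ⟨(mem_linePoints_iff_div_eq hB hp).2 hl, (mem_linePoints_iff_div_eq hB hq).2 (hpq ▸ hl)⟩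
  · rintro ⟨hp, hq⟩
    have hp' := mem_filter.1 hp
    have hq' := mem_filter.1 hq
    refine ⟨⟨⟨hp'.1, hq'.1⟩, ?_⟩, ?_⟩ <;>
      simp only [(mem_linePoints_iff_div_eq hB hp'.1).1 hp, (mem_linePoints_iff_div_eq hB hq'.1).1 hq]

lemma card_linePoints_pos (hB : ∀ b ∈ B, 0 < b) {l : ℝ} (hl : l ∈ slopes A B) :
    0 < #(linePoints A B l) := by
  obtain ⟨p, hp, rfl⟩ := mem_image.1 hl
  exact card_pos.2 ⟨p, (mem_linePoints_iff_div_eq hB hp).2 rfl⟩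

lemma sum_sq_card_linePoints_le_of_le_two_mul (hB : ∀ b ∈ B, 0 < b) (hBA : #B ≤ #A)
    {T : Finset ℝ} (hT : ∀ l ∈ T, ∀ m ∈ T, #(linePoints A B l) ≤ 2 * #(linePoints A B m)) :
    ∑ l ∈ T, #(linePoints A B l) ^ 2 ≤ 3 * (#(A + A) * #(B + B)) := by
  rcases T.eq_empty_or_nonempty with rfl | hTne
  · simp
  have hsum := sum_sq_le_of_le_two_mul (fun m l => card_belowLine_add_mul_le hB) hT
    (T.max' hTne) (T.max'_mem hTne) (T.le_max' · ·)
  have hline := card_linePoints_le (A := A) (B := B) (T.max' hTne)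
  have hbelow := card_belowLine_le (A := A) (B := B) (T.max' hTne)
  have hAA : #A ≤ #(A + A) := card_le_card_add_self
  have hBB : #B ≤ #(B + B) := card_le_card_add_self
  nlinarith

/-- Classifying `x ≥ 1` by `Nat.log 2 (x - 1)` puts `{1, 2}` in class `0` and `(2ᵏ, 2ᵏ⁺¹]` in class
`k`, so the values in `[1, n]` fall into `⌈log₂ n⌉` classes when `n ≥ 2`. -/
lemma le_two_mul_of_log_sub_one_eq {x y : ℕ} (hy : 1 ≤ y)
    (h : Nat.log 2 (x - 1) = Nat.log 2 (y - 1)) : x ≤ 2 * y := by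
  have hx : x - 1 < 2 ^ (Nat.log 2 (y - 1) + 1) := h ▸ Nat.lt_pow_succ_log_self one_lt_two _
  have hy' : 2 ^ Nat.log 2 (y - 1) ≤ y := by
    rcases Nat.eq_zero_or_pos (y - 1) with h0 | h0
    · simpa [h0] using hy
    · exact (Nat.pow_log_le_self 2 h0.ne').trans (Nat.sub_le y 1)
  rw [pow_succ] at hx
  omega

lemma sum_sq_card_linePoints_le (hB : ∀ b ∈ B, 0 < b) (hBA : #B ≤ #A) (h2 : 2 ≤ #B) :
    ∑ l ∈ slopes A B, #(linePoints A B l) ^ 2 ≤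
      Nat.clog 2 #B * (3 * (#(A + A) * #(B + B))) := by
  have hmaps : ∀ l ∈ slopes A B, Nat.log 2 (#(linePoints A B l) - 1) ∈ range (Nat.clog 2 #B) := by
    intro l _
    refine mem_range.2 (Nat.log_lt_of_lt_pow' (Nat.clog_pos one_lt_two h2).ne' ?_)
    have := card_linePoints_le (A := A) (B := B) l
    have := Nat.le_pow_clog one_lt_two #B
    omega
  rw [← sum_fiberwise_of_maps_to hmaps]
  calc _ ≤ ∑ _k ∈ range (Nat.clog 2 #B), 3 * (#(A + A) * #(B + B)) := by
        refine sum_le_sum fun k _ => sum_sq_card_linePoints_le_of_le_two_mul hB hBA ?_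
        simp only [mem_filter]
        rintro l ⟨-, hl⟩ m ⟨hm, hm'⟩
        exact le_two_mul_of_log_sub_one_eq (card_linePoints_pos hB hm) (hl.trans hm'.symm)
    _ = _ := by rw [sum_const, card_range, smul_eq_mul]

end

theorem stmt_5_general (A B : Finset ℝ) (hB : ∀ b ∈ B, 0 < b)
    (hBA : B.card ≤ A.card) (h2 : 2 ≤ B.card) :
    (A.card : ℝ) ^ 2 * (B.card : ℝ) ^ 2 / ((A * B).card : ℝ) ≤
      4 * (Nat.clog 2 B.card : ℝ) * ((A + A).card : ℝ) * ((B + B).card : ℝ) := by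
  have hAB : (0 : ℝ) < #(A * B) := by
    exact_mod_cast card_pos.2 ((card_pos.1 (by omega)).mul (card_pos.1 (by omega)))
  have key : #A ^ 2 * #B ^ 2 ≤ #(A * B) * (Nat.clog 2 #B * (3 * (#(A + A) * #(B + B)))) := by
    refine (le_card_mul_mul_mulEnergy A B).trans (Nat.mul_le_mul_left _ ?_)
    rw [mulEnergy_eq_sum_sq_card_linePoints hB]
    exact sum_sq_card_linePoints_le hB hBA h2
  have hkey := (Nat.cast_le (α := ℝ)).2 key
  push_cast at hkey
  rw [div_le_iff₀ hAB]
  nlinarith [hkey]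

theorem stmt_5 (A B : Finset ℝ) (hA : ∀ a ∈ A, 0 < a) (hB : ∀ b ∈ B, 0 < b)
    (hBA : B.card ≤ A.card) (h2 : 2 ≤ B.card) :
    (A.card : ℝ) ^ 2 * (B.card : ℝ) ^ 2 / ((A * B).card : ℝ) ≤
      4 * (Nat.clog 2 B.card : ℝ) * ((A + A).card : ℝ) * ((B + B).card : ℝ) :=
  stmt_5_general A B hB hBA h2
end

section
/- Let A and B be finite sets of positive reals with |B| ≥ 2. Then E(A,B) ≤ 4·⌈log₂|B|⌉·|A+A|·|B+B|, where E(A,B) = |{(a,b,c,d) ∈ A×B×A×B : a·d = b·c}|. -/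
open Finset Pointwise

namespace Stmt7Aux

/-- The fiber of points of `A ×ˢ B` on the line through the origin of slope `l`. -/
noncomputable def fib (A B : Finset ℝ) (l : ℝ) : Finset (ℝ × ℝ) :=
  (A ×ˢ B).filter (fun p => p.2 = l * p.1)

/-- Number of points on the line of slope `l`. -/
noncomputable def m (A B : Finset ℝ) (l : ℝ) : ℕ := (fib A B l).card

/-- The set of realized slopes. -/
noncomputable def R (A B : Finset ℝ) : Finset ℝ := (A ×ˢ B).image (fun p => p.2 / p.1)

/-- The next slope in `Λ` after `l` (junk value if none). -/
noncomputable def nxt (Λ : Finset ℝ) (l : ℝ) : ℝ :=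
  if h : (Λ.filter (fun x => l < x)).Nonempty then (Λ.filter (fun x => l < x)).min' h else 0

variable {A B : Finset ℝ}

lemma mem_fib {p : ℝ × ℝ} {l : ℝ} :
    p ∈ fib A B l ↔ (p.1 ∈ A ∧ p.2 ∈ B) ∧ p.2 = l * p.1 := by
  simp [fib, Finset.mem_filter, Finset.mem_product]

lemma fib_pos (hA : ∀ a ∈ A, 0 < a) (hB : ∀ b ∈ B, 0 < b) {p : ℝ × ℝ} {l : ℝ}
    (hp : p ∈ fib A B l) : 0 < p.1 ∧ 0 < p.2 := by
  rw [mem_fib] at hp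
  exact ⟨hA _ hp.1.1, hB _ hp.1.2⟩

lemma R_pos (hA : ∀ a ∈ A, 0 < a) (hB : ∀ b ∈ B, 0 < b) {l : ℝ} (hl : l ∈ R A B) :
    0 < l := by
  simp only [R, Finset.mem_image, Finset.mem_product] at hl
  obtain ⟨p, hp, rfl⟩ := hl
  exact div_pos (hB _ hp.2) (hA _ hp.1)

lemma m_pos (hA : ∀ a ∈ A, 0 < a) {l : ℝ} (hl : l ∈ R A B) : 1 ≤ m A B l := by
  simp only [R, Finset.mem_image, Finset.mem_product] at hl
  obtain ⟨p, hp, rfl⟩ := hl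
  have hp1 : (p.1 : ℝ) ≠ 0 := ne_of_gt (hA _ hp.1)
  have : p ∈ fib A B (p.2 / p.1) := by
    rw [mem_fib]
    exact ⟨hp, by field_simp⟩
  exact Finset.card_pos.2 ⟨p, this⟩

lemma m_le_cardA : m A B l ≤ A.card := by
  apply Finset.card_le_card_of_injOn Prod.fst
  · intro p hp; exact (mem_fib.1 hp).1.1
  · intro p hp q hq h
    rw [Finset.mem_coe, mem_fib] at hp hq
    exact Prod.ext h (by rw [hp.2, hq.2, h])

lemma m_le_cardB {l : ℝ} (hl : l ≠ 0) : m A B l ≤ B.card := by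
  apply Finset.card_le_card_of_injOn Prod.snd
  · intro p hp; exact (mem_fib.1 hp).1.2
  · intro p hp q hq h
    rw [Finset.mem_coe, mem_fib] at hp hq
    have : l * p.1 = l * q.1 := by rw [← hp.2, ← hq.2, h]
    exact Prod.ext (mul_left_cancel₀ hl this) h

/-- Decomposition of the energy set into fibers. -/
lemma energy_decomp (hA : ∀ a ∈ A, 0 < a) (hB : ∀ b ∈ B, 0 < b) :
    (((A ×ˢ B) ×ˢ (A ×ˢ B)).filter (fun p => p.1.1 * p.2.2 = p.1.2 * p.2.1)) =
      (R A B).biUnion (fun l => fib A B l ×ˢ fib A B l) := by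
  ext ⟨⟨a, b⟩, ⟨c, d⟩⟩
  simp only [Finset.mem_filter, Finset.mem_product, Finset.mem_biUnion]
  constructor
  · rintro ⟨⟨⟨ha, hb⟩, hc, hd⟩, h⟩
    have ha0 : (a : ℝ) ≠ 0 := ne_of_gt (hA _ ha)
    refine ⟨b / a, ?_, ?_, ?_⟩
    · exact Finset.mem_image.2 ⟨(a, b), Finset.mem_product.2 ⟨ha, hb⟩, rfl⟩
    · rw [mem_fib]; exact ⟨⟨ha, hb⟩, by field_simp⟩
    · rw [mem_fib]
      refine ⟨⟨hc, hd⟩, ?_⟩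
      field_simp
      linarith [h]
  · rintro ⟨l, _, h1, h2⟩
    rw [mem_fib] at h1 h2
    refine ⟨⟨⟨h1.1.1, h1.1.2⟩, h2.1.1, h2.1.2⟩, ?_⟩
    simp only at *
    rw [h1.2, h2.2]; ring

lemma energy_card (hA : ∀ a ∈ A, 0 < a) (hB : ∀ b ∈ B, 0 < b) :
    (((A ×ˢ B) ×ˢ (A ×ˢ B)).filter (fun p => p.1.1 * p.2.2 = p.1.2 * p.2.1)).card =
      ∑ l ∈ R A B, (m A B l) ^ 2 := by
  rw [energy_decomp hA hB, Finset.card_biUnion]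
  · refine Finset.sum_congr rfl fun l _ => ?_
    rw [Finset.card_product, sq, m]
  · intro l hl l' hl' hne
    simp only [Finset.disjoint_left]
    rintro ⟨p, q⟩ h1 h2
    simp only [Finset.mem_product] at h1 h2
    have hp1 := (mem_fib.1 h1.1).2
    have hp2 := (mem_fib.1 h2.1).2
    have hppos : (0 : ℝ) < p.1 := (fib_pos hA hB h1.1).1
    exact hne (mul_right_cancel₀ (ne_of_gt hppos) (hp1 ▸ hp2 ▸ rfl))

section Consec

variable (Λ : Finset ℝ)

lemma nxt_spec {l : ℝ} (hne : Λ.Nonempty) (hl : l ∈ Λ.erase (Λ.max' hne)) :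
    l < nxt Λ l ∧ nxt Λ l ∈ Λ ∧ ∀ μ ∈ Λ, l < μ → nxt Λ l ≤ μ := by
  have hlΛ : l ∈ Λ := Finset.mem_of_mem_erase hl
  have hlm : l < Λ.max' hne :=
    lt_of_le_of_ne (Finset.le_max' _ _ hlΛ) (Finset.ne_of_mem_erase hl)
  have hfne : (Λ.filter (fun x => l < x)).Nonempty :=
    ⟨Λ.max' hne, Finset.mem_filter.2 ⟨Λ.max'_mem hne, hlm⟩⟩
  have hdef : nxt Λ l = (Λ.filter (fun x => l < x)).min' hfne := dif_pos hfne
  have hmem := Finset.min'_mem _ hfne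
  rw [← hdef, Finset.mem_filter] at hmem
  refine ⟨hmem.2, hmem.1, fun μ hμ hlμ => ?_⟩
  rw [hdef]
  exact Finset.min'_le _ _ (Finset.mem_filter.2 ⟨hμ, hlμ⟩)

/-- The sums of points on the lines `l` and `nxt l`. -/
noncomputable def T (A B : Finset ℝ) (Λ : Finset ℝ) (l : ℝ) : Finset (ℝ × ℝ) :=
  ((fib A B l) ×ˢ (fib A B (nxt Λ l))).image (fun pq => pq.1 + pq.2)

lemma T_card (hA : ∀ a ∈ A, 0 < a) {l μ : ℝ} (hlμ : l < μ) :
    (((fib A B l) ×ˢ (fib A B μ)).image (fun pq => pq.1 + pq.2)).card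
      = m A B l * m A B μ := by
  rw [Finset.card_image_of_injOn, Finset.card_product, m, m]
  rintro ⟨p, q⟩ hpq ⟨p', q'⟩ hpq' heq
  simp only [Finset.mem_coe, Finset.mem_product] at hpq hpq'
  have hp := (mem_fib.1 hpq.1).2
  have hq := (mem_fib.1 hpq.2).2
  have hp' := (mem_fib.1 hpq'.1).2
  have hq' := (mem_fib.1 hpq'.2).2
  have h1 : p.1 + q.1 = p'.1 + q'.1 := congrArg Prod.fst heq
  have h2 : p.2 + q.2 = p'.2 + q'.2 := congrArg Prod.snd heq
  have key : (l - μ) * (p.1 - p'.1) = 0 := by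
    linear_combination h2 - hp - hq + hp' + hq' - μ * h1
  have hlμ' : l - μ ≠ 0 := sub_ne_zero.2 (ne_of_lt hlμ)
  have hpp : p.1 = p'.1 := by
    rcases mul_eq_zero.1 key with h | h
    · exact absurd h hlμ'
    · linarith [sub_eq_zero.1 h]
  have hqq : q.1 = q'.1 := by linarith
  have : p = p' := Prod.ext hpp (by rw [hp, hp', hpp])
  have : q = q' := Prod.ext hqq (by rw [hq, hq', hqq])
  simp_all

lemma T_subset : T A B Λ l ⊆ (A + A) ×ˢ (B + B) := by
  intro s hs
  simp only [T, Finset.mem_image, Finset.mem_product] at hs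
  obtain ⟨⟨p, q⟩, hpq, rfl⟩ := hs
  simp only [Finset.mem_product] at hpq
  have hp := mem_fib.1 hpq.1
  have hq := mem_fib.1 hpq.2
  rw [Finset.mem_product]
  exact ⟨Finset.add_mem_add hp.1.1 hq.1.1, Finset.add_mem_add hp.1.2 hq.1.2⟩

lemma T_slope (hA : ∀ a ∈ A, 0 < a) (hB : ∀ b ∈ B, 0 < b) {l : ℝ}
    (hlt : l < nxt Λ l) {s : ℝ × ℝ} (hs : s ∈ T A B Λ l) :
    0 < s.1 ∧ l * s.1 < s.2 ∧ s.2 < nxt Λ l * s.1 := by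
  simp only [T, Finset.mem_image, Finset.mem_product] at hs
  obtain ⟨⟨p, q⟩, hpq, rfl⟩ := hs
  simp only [Finset.mem_product] at hpq
  have hp := (mem_fib.1 hpq.1).2
  have hq := (mem_fib.1 hpq.2).2
  have hpp := fib_pos hA hB hpq.1
  have hqp := fib_pos hA hB hpq.2
  simp only [Prod.fst_add, Prod.snd_add]
  refine ⟨by linarith [hpp.1, hqp.1], ?_, ?_⟩
  · rw [hp, hq]; nlinarith [hqp.1, hpp.1]
  · rw [hp, hq]; nlinarith [hqp.1, hpp.1]

/-- Key geometric estimate: the sum over consecutive slope pairs of products of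
multiplicities is at most `|A+A| * |B+B|`. -/
lemma consec_bound (hA : ∀ a ∈ A, 0 < a) (hB : ∀ b ∈ B, 0 < b)
    (hΛ : Λ ⊆ R A B) (hne : Λ.Nonempty) :
    ∑ l ∈ Λ.erase (Λ.max' hne), m A B l * m A B (nxt Λ l) ≤
      (A + A).card * (B + B).card := by
  have hTcard : ∀ l ∈ Λ.erase (Λ.max' hne), (T A B Λ l).card = m A B l * m A B (nxt Λ l) :=
    fun l hl => T_card hA (nxt_spec Λ hne hl).1
  calc ∑ l ∈ Λ.erase (Λ.max' hne), m A B l * m A B (nxt Λ l)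
      = ∑ l ∈ Λ.erase (Λ.max' hne), (T A B Λ l).card :=
        (Finset.sum_congr rfl hTcard).symm
    _ = ((Λ.erase (Λ.max' hne)).biUnion (fun l => T A B Λ l)).card := by
        rw [Finset.card_biUnion]
        intro l hl l' hl' hne'
        simp only [Finset.disjoint_left]
        intro s hs hs'
        have h1 := T_slope Λ hA hB (nxt_spec Λ hne hl).1 hs
        have h2 := T_slope Λ hA hB (nxt_spec Λ hne hl').1 hs'
        rcases lt_or_gt_of_ne hne' with h | h
        · -- l < l', so nxt Λ l ≤ l'
          have hle : nxt Λ l ≤ l' := (nxt_spec Λ hne hl).2.2 l' (Finset.mem_of_mem_erase hl') h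
          have : nxt Λ l * s.1 ≤ l' * s.1 := mul_le_mul_of_nonneg_right hle (le_of_lt h1.1)
          linarith [h1.2.2, h2.2.1]
        · have hle : nxt Λ l' ≤ l := (nxt_spec Λ hne hl').2.2 l (Finset.mem_of_mem_erase hl) h
          have : nxt Λ l' * s.1 ≤ l * s.1 := mul_le_mul_of_nonneg_right hle (le_of_lt h1.1)
          linarith [h2.2.2, h1.2.1]
    _ ≤ ((A + A) ×ˢ (B + B)).card :=
        Finset.card_le_card (Finset.biUnion_subset.2 fun l _ => T_subset Λ)
    _ = (A + A).card * (B + B).card := Finset.card_product _ _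

end Consec

/-- Dyadic class bound: if all multiplicities in `Λ` lie in `[2^j, 2^(j+1))`, then the
energy contribution of `Λ` is at most `3 |A+A| |B+B|`. -/
lemma class_bound (hA : ∀ a ∈ A, 0 < a) (hB : ∀ b ∈ B, 0 < b)
    (hAne : A.Nonempty) (hBne : B.Nonempty)
    (Λ : Finset ℝ) (hΛ : Λ ⊆ R A B) (j : ℕ)
    (hlow : ∀ l ∈ Λ, 2 ^ j ≤ m A B l) (hhigh : ∀ l ∈ Λ, m A B l < 2 ^ (j + 1)) :
    ∑ l ∈ Λ, (m A B l) ^ 2 ≤ 3 * ((A + A).card * (B + B).card) := by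
  rcases Λ.eq_empty_or_nonempty with rfl | hne
  · simp
  set M := Λ.max' hne with hM
  have hMmem : M ∈ Λ := Λ.max'_mem hne
  have hsplit : ∑ l ∈ Λ, (m A B l) ^ 2
      = (m A B M) ^ 2 + ∑ l ∈ Λ.erase M, (m A B l) ^ 2 :=
    (Finset.add_sum_erase _ _ hMmem).symm
  have hS : A.card * B.card ≤ (A + A).card * (B + B).card := by
    have h1 : A.card ≤ (A + A).card := Finset.card_le_card_add_left hAne
    have h2 : B.card ≤ (B + B).card := Finset.card_le_card_add_left hBne
    exact Nat.mul_le_mul h1 h2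
  have hMsq : (m A B M) ^ 2 ≤ (A + A).card * (B + B).card := by
    have hMR : M ∈ R A B := hΛ hMmem
    have hM0 : (M : ℝ) ≠ 0 := ne_of_gt (R_pos hA hB hMR)
    calc (m A B M) ^ 2 = m A B M * m A B M := sq _
      _ ≤ A.card * B.card := Nat.mul_le_mul m_le_cardA (m_le_cardB hM0)
      _ ≤ _ := hS
  have herase : ∑ l ∈ Λ.erase M, (m A B l) ^ 2
      ≤ 2 * ((A + A).card * (B + B).card) := by
    have hbd : ∀ l ∈ Λ.erase M, (m A B l) ^ 2 ≤ 2 * (m A B l * m A B (nxt Λ l)) := by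
      intro l hl
      have hspec := nxt_spec Λ hne hl
      have hnx : m A B (nxt Λ l) ≥ 2 ^ j := hlow _ hspec.2.1
      have hup : m A B l < 2 ^ (j + 1) := hhigh _ (Finset.mem_of_mem_erase hl)
      calc (m A B l) ^ 2 = m A B l * m A B l := sq _
        _ ≤ m A B l * (2 * 2 ^ j) := by
            apply Nat.mul_le_mul_left
            calc m A B l ≤ 2 ^ (j + 1) := le_of_lt hup
              _ = 2 * 2 ^ j := by ring
        _ ≤ m A B l * (2 * m A B (nxt Λ l)) := by
            exact Nat.mul_le_mul_left _ (Nat.mul_le_mul_left _ hnx)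
        _ = 2 * (m A B l * m A B (nxt Λ l)) := by ring
    calc ∑ l ∈ Λ.erase M, (m A B l) ^ 2
        ≤ ∑ l ∈ Λ.erase M, 2 * (m A B l * m A B (nxt Λ l)) := Finset.sum_le_sum hbd
      _ = 2 * ∑ l ∈ Λ.erase M, m A B l * m A B (nxt Λ l) := by rw [Finset.mul_sum]
      _ ≤ 2 * ((A + A).card * (B + B).card) :=
          Nat.mul_le_mul_left _ (consec_bound Λ hA hB hΛ hne)
  omega

end Stmt7Aux

open Stmt7Aux in
theorem stmt_7 (A B : Finset ℝ) (hA : ∀ a ∈ A, 0 < a) (hB : ∀ b ∈ B, 0 < b)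
    (h2 : 2 ≤ B.card) :
    ((((A ×ˢ B) ×ˢ (A ×ˢ B)).filter
        (fun p => p.1.1 * p.2.2 = p.1.2 * p.2.1)).card : ℝ) ≤
      4 * (Nat.clog 2 B.card : ℝ) * ((A + A).card : ℝ) * ((B + B).card : ℝ) := by
  have hBne : B.Nonempty := Finset.card_pos.1 (by omega)
  rcases A.eq_empty_or_nonempty with rfl | hAne
  · simp only [Finset.empty_product, Finset.product_empty, Finset.filter_empty,
      Finset.card_empty, Nat.cast_zero]
    positivity
  -- main: work in ℕ
  set S : ℕ := (A + A).card * (B + B).card with hSdef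
  have hS : A.card * B.card ≤ S := by
    have h1 : A.card ≤ (A + A).card := Finset.card_le_card_add_left hAne
    have h2' : B.card ≤ (B + B).card := Finset.card_le_card_add_left hBne
    exact Nat.mul_le_mul h1 h2'
  set t : ℕ := Nat.log 2 B.card with htdef
  have hmain : (((A ×ˢ B) ×ˢ (A ×ˢ B)).filter
      (fun p => p.1.1 * p.2.2 = p.1.2 * p.2.1)).card ≤ (3 * t + 1) * S := by
    rw [energy_card hA hB]
    -- split R into dyadic classes by Nat.log 2 (m l)
    have hmaps : ∀ l ∈ R A B, Nat.log 2 (m A B l) ∈ Finset.range (t + 1) := by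
      intro l hl
      rw [Finset.mem_range, Nat.lt_succ_iff, htdef]
      have hl0 : (l : ℝ) ≠ 0 := ne_of_gt (R_pos hA hB hl)
      exact Nat.log_mono_right (m_le_cardB hl0)
    rw [← Finset.sum_fiberwise_of_maps_to hmaps (fun l => (m A B l) ^ 2)]
    have hbound : ∀ j ∈ Finset.range (t + 1),
        ∑ l ∈ (R A B).filter (fun l => Nat.log 2 (m A B l) = j), (m A B l) ^ 2
          ≤ if j = 0 then S else 3 * S := by
      intro j _
      set Λ := (R A B).filter (fun l => Nat.log 2 (m A B l) = j) with hΛdef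
      have hΛsub : Λ ⊆ R A B := Finset.filter_subset _ _
      have hlow : ∀ l ∈ Λ, 2 ^ j ≤ m A B l := by
        intro l hl
        rw [hΛdef, Finset.mem_filter] at hl
        have hm1 : m A B l ≠ 0 := Nat.one_le_iff_ne_zero.1 (m_pos hA hl.1)
        rw [← hl.2]
        exact Nat.pow_log_le_self 2 hm1
      have hhigh : ∀ l ∈ Λ, m A B l < 2 ^ (j + 1) := by
        intro l hl
        rw [hΛdef, Finset.mem_filter] at hl
        rw [← hl.2]
        exact Nat.lt_pow_succ_log_self (by norm_num) _
      by_cases hj : j = 0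
      · -- all multiplicities are 1
        subst hj
        simp only [if_pos rfl]
        have hone : ∀ l ∈ Λ, (m A B l) ^ 2 = 1 := by
          intro l hl
          have h1 := hlow l hl
          have h2' := hhigh l hl
          have : m A B l = 1 := by omega
          rw [this]; norm_num
        calc ∑ l ∈ Λ, (m A B l) ^ 2 = ∑ _l ∈ Λ, 1 := Finset.sum_congr rfl hone
          _ = Λ.card := by simp
          _ ≤ (R A B).card := Finset.card_le_card hΛsub
          _ ≤ (A ×ˢ B).card := Finset.card_image_le
          _ = A.card * B.card := Finset.card_product _ _
          _ ≤ S := hS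
      · simp only [if_neg hj]
        exact class_bound hA hB hAne hBne Λ hΛsub j hlow hhigh
    calc ∑ j ∈ Finset.range (t + 1),
          ∑ l ∈ (R A B).filter (fun l => Nat.log 2 (m A B l) = j), (m A B l) ^ 2
        ≤ ∑ j ∈ Finset.range (t + 1), (if j = 0 then S else 3 * S) :=
          Finset.sum_le_sum hbound
      _ = (∑ _j ∈ Finset.range t, 3 * S) + S := by
          rw [Finset.sum_range_succ']
          simp
      _ = 3 * t * S + S := by rw [Finset.sum_const, Finset.card_range]; ring
      _ = (3 * t + 1) * S := by ring
  have hclog1 : 1 ≤ Nat.clog 2 B.card := Nat.clog_pos (by norm_num) h2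
  have hclogt : t ≤ Nat.clog 2 B.card := Nat.log_le_clog 2 B.card
  have hfinal : (((A ×ˢ B) ×ˢ (A ×ˢ B)).filter
      (fun p => p.1.1 * p.2.2 = p.1.2 * p.2.1)).card
        ≤ 4 * Nat.clog 2 B.card * (A + A).card * (B + B).card := by
    calc _ ≤ (3 * t + 1) * S := hmain
      _ ≤ (4 * Nat.clog 2 B.card) * S := Nat.mul_le_mul_right _ (by omega)
      _ = 4 * Nat.clog 2 B.card * (A + A).card * (B + B).card := by
          rw [hSdef]; ring
  calc ((((A ×ˢ B) ×ˢ (A ×ˢ B)).filter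
        (fun p => p.1.1 * p.2.2 = p.1.2 * p.2.1)).card : ℝ)
      ≤ ((4 * Nat.clog 2 B.card * (A + A).card * (B + B).card : ℕ) : ℝ) := by
        exact_mod_cast hfinal
    _ = 4 * (Nat.clog 2 B.card : ℝ) * ((A + A).card : ℝ) * ((B + B).card : ℝ) := by
        push_cast; ring
end

section
/- For any finite set A of positive reals, |A/A| ≤ |AA|² / |A|. -/
open Finset Pointwise

theorem stmt_13 (A : Finset ℝ) (hA : ∀ a ∈ A, 0 < a) (hne : A.Nonempty) :
    ((A / A).card : ℝ) ≤ ((A * A).card : ℝ) ^ 2 / (A.card : ℝ) := by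
  classical
  set B : Finset ℝ := A.image Real.log with hB
  have hinjA : Set.InjOn Real.log A := fun x hx y hy h =>
    Real.log_injOn_pos (Set.mem_Ioi.2 (hA x hx)) (Set.mem_Ioi.2 (hA y hy)) h
  have hcardB : B.card = A.card := Finset.card_image_of_injOn hinjA
  have hmul : (A * A).image Real.log = B + B := by
    ext x
    simp only [Finset.mem_image, Finset.mem_mul, Finset.mem_add, hB]
    constructor
    · rintro ⟨z, ⟨a, ha, b, hb, rfl⟩, rfl⟩
      exact ⟨Real.log a, ⟨a, ha, rfl⟩, Real.log b, ⟨b, hb, rfl⟩,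
        (Real.log_mul (hA a ha).ne' (hA b hb).ne').symm⟩
    · rintro ⟨_, ⟨a, ha, rfl⟩, _, ⟨b, hb, rfl⟩, rfl⟩
      exact ⟨a * b, ⟨a, ha, b, hb, rfl⟩, Real.log_mul (hA a ha).ne' (hA b hb).ne'⟩
  have hdiv : (A / A).image Real.log = B - B := by
    ext x
    simp only [Finset.mem_image, Finset.mem_div, Finset.mem_sub, hB]
    constructor
    · rintro ⟨z, ⟨a, ha, b, hb, rfl⟩, rfl⟩
      exact ⟨Real.log a, ⟨a, ha, rfl⟩, Real.log b, ⟨b, hb, rfl⟩,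
        (Real.log_div (hA a ha).ne' (hA b hb).ne').symm⟩
    · rintro ⟨_, ⟨a, ha, rfl⟩, _, ⟨b, hb, rfl⟩, rfl⟩
      exact ⟨a / b, ⟨a, ha, b, hb, rfl⟩, Real.log_div (hA a ha).ne' (hA b hb).ne'⟩
  have hposmul : ∀ x ∈ A * A, (0:ℝ) < x := by
    rintro x hx
    obtain ⟨a, ha, b, hb, rfl⟩ := Finset.mem_mul.1 hx
    exact mul_pos (hA a ha) (hA b hb)
  have hposdiv : ∀ x ∈ A / A, (0:ℝ) < x := by
    rintro x hx
    obtain ⟨a, ha, b, hb, rfl⟩ := Finset.mem_div.1 hx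
    exact div_pos (hA a ha) (hA b hb)
  have hcardmul : (B + B).card = (A * A).card := by
    rw [← hmul]
    exact Finset.card_image_of_injOn fun x hx y hy h =>
      Real.log_injOn_pos (Set.mem_Ioi.2 (hposmul x hx)) (Set.mem_Ioi.2 (hposmul y hy)) h
  have hcarddiv : (B - B).card = (A / A).card := by
    rw [← hdiv]
    exact Finset.card_image_of_injOn fun x hx y hy h =>
      Real.log_injOn_pos (Set.mem_Ioi.2 (hposdiv x hx)) (Set.mem_Ioi.2 (hposdiv y hy)) h
  have key : (B - B).card * B.card ≤ (B + B).card * (B + B).card :=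
    Finset.ruzsa_triangle_inequality_sub_add_add B B B
  rw [hcardmul, hcarddiv, hcardB] at key
  have hApos : (0:ℝ) < A.card := by exact_mod_cast Finset.card_pos.2 hne
  rw [le_div_iff₀ hApos]
  have : ((A / A).card : ℝ) * A.card ≤ ((A * A).card : ℝ) * (A * A).card := by
    exact_mod_cast key
  calc ((A / A).card : ℝ) * A.card ≤ ((A * A).card : ℝ) * (A * A).card := this
    _ = ((A * A).card : ℝ) ^ 2 := (sq _).symm
end

section
/- Let A be a finite nonempty set of positive reals and k ≥ 2 an integer. Let H be the set of lines through the origin in ℝ^k each containing at least |A|^k/(2|A/A|^{k-1}) points of A^k. Then |H| ≥ |A|^{k-1}/2. -/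
/-!
Every point x of A^k spans a line, determined by its ratio vector (x_{i+1}/x_0)_i ∈ (A/A)^{k-1};
so at most |A/A|^{k-1} lines meet A^k, and those carrying fewer than |A|^k/(2|A/A|^{k-1})
points of A^k together carry at most half of it. The other half lies on the popular lines, and a
point of A^k on a given line is determined by its first coordinate, so each line carries at most
|A| of them; hence there are at least |A|^{k-1}/2 popular lines.
-/

open Finset Fintype Pointwise

theorem card_div_two_le_card_filter_popular_mul {α β : Type*} [DecidableEq β] (s : Finset α)
    (f : α → β) {N M : ℝ} (hN : ∀ b, (#{a ∈ s | f a = b} : ℝ) ≤ N)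
    (hM : (#(s.image f) : ℝ) ≤ M) :
    (#s : ℝ) / 2 ≤ #{b ∈ s.image f | (#s : ℝ) / (2 * M) ≤ #{a ∈ s | f a = b}} * N := by
  set T := (#s : ℝ) / (2 * M)
  set fiber : β → ℝ := fun b => #{a ∈ s | f a = b}
  have hT : 0 ≤ T := div_nonneg (by positivity) (by linarith [(Nat.cast_nonneg _).trans hM])
  have hsum : (#s : ℝ) = ∑ b ∈ s.image f, fiber b := by
    rw [card_eq_sum_card_image f s]; push_cast; rfl
  have hpopular : ∑ b ∈ s.image f with T ≤ fiber b, fiber b ≤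
      #{b ∈ s.image f | T ≤ fiber b} * N := by
    simpa using sum_le_card_nsmul _ _ _ fun b _ => hN b
  have hrare : ∑ b ∈ s.image f with ¬T ≤ fiber b, fiber b ≤ #s / 2 := calc
    _ ≤ #{b ∈ s.image f | ¬T ≤ fiber b} * T := by
      simpa using sum_le_card_nsmul {b ∈ s.image f | ¬T ≤ fiber b} fiber T
        fun b hb => (not_le.mp (mem_filter.mp hb).2).le
    _ ≤ M * T := by gcongr; exact le_trans (by exact_mod_cast card_filter_le _ _) hM
    _ ≤ #s / 2 := by
      rcases eq_or_ne M 0 with rfl | hM0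
      · simp; positivity
      · exact le_of_eq (by simp only [T]; field_simp)
  linarith [sum_filter_add_sum_filter_not (s.image f) (T ≤ fiber ·) fiber]

section Lines

variable {K ι : Type*} [Field K]

def line (v : ι → K) : Set (ι → K) := {x | ∃ t : K, x = t • v}

theorem mem_line_self (v : ι → K) : v ∈ line v := ⟨1, (one_smul K v).symm⟩

theorem line_smul {t : K} (ht : t ≠ 0) (v : ι → K) : line (t • v) = line v := by
  ext x
  constructor
  · rintro ⟨s, rfl⟩
    exact ⟨s * t, smul_smul s t v⟩
  · rintro ⟨s, rfl⟩
    exact ⟨s / t, by rw [smul_smul, div_mul_cancel₀ s ht]⟩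

theorem line_eq_of_mem {v x : ι → K} (hx : x ∈ line v) (hx0 : x ≠ 0) : line x = line v := by
  obtain ⟨t, rfl⟩ := hx
  exact line_smul (left_ne_zero_of_smul hx0) v

theorem eq_of_mem_line_of_apply_eq {x y : ι → K} {i : ι} (hy : y ∈ line x) (hyi : y i = x i)
    (hxi : x i ≠ 0) : y = x := by
  obtain ⟨t, rfl⟩ := hy
  have ht : t = 1 := by
    simpa [hxi] using hyi
  rw [ht, one_smul]

variable [Fintype ι] [DecidableEq ι] {A : Finset K}

theorem ne_zero_of_mem_piFinset [Nonempty ι] (hA : 0 ∉ A) {x : ι → K}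
    (hx : x ∈ piFinset fun _ : ι => A) : x ≠ 0 := by
  rintro rfl
  exact hA (mem_piFinset.1 hx (Classical.arbitrary ι))

theorem line_inter_setOf_forall_mem [DecidableEq (Set (ι → K))] [Nonempty ι] (hA : 0 ∉ A)
    (x : ι → K) :
    line x ∩ {f | ∀ i, f i ∈ A} = ↑{y ∈ piFinset (fun _ : ι => A) | line y = line x} := by
  ext y
  simp only [Set.mem_inter_iff, coe_filter, ← mem_piFinset (t := fun _ => A)]
  constructor
  · rintro ⟨hyx, hy⟩
    exact ⟨hy, line_eq_of_mem hyx (ne_zero_of_mem_piFinset hA hy)⟩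
  · rintro ⟨hy, hyx⟩
    exact ⟨hyx ▸ mem_line_self y, hy⟩

theorem card_filter_line_eq_le [DecidableEq (Set (ι → K))] [Nonempty ι] (hA : 0 ∉ A)
    (l : Set (ι → K)) :
    #{y ∈ piFinset (fun _ : ι => A) | line y = l} ≤ #A := by
  obtain ⟨i⟩ := ‹Nonempty ι›
  refine card_le_card_of_injOn (· i) (fun y hy => mem_piFinset.1 (mem_filter.1 hy).1 i) ?_
  intro y hy y' hy' hyi
  rw [mem_coe, mem_filter] at hy hy'
  refine eq_of_mem_line_of_apply_eq ?_ hyi fun h => hA (h ▸ mem_piFinset.1 hy'.1 i)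
  exact hy'.2 ▸ hy.2 ▸ mem_line_self y

theorem setOf_popular_lines_eq [DecidableEq (Set (ι → K))] [Nonempty ι] (hA : 0 ∉ A) {T : ℝ}
    (hT : 0 < T) :
    {l | (∃ v : ι → K, v ≠ 0 ∧ l = line v) ∧ T ≤ ((l ∩ {f | ∀ i, f i ∈ A}).ncard : ℝ)} =
      ↑{l ∈ (piFinset fun _ : ι => A).image line |
        T ≤ #{y ∈ piFinset (fun _ : ι => A) | line y = l}} := by
  ext l
  simp only [coe_filter, mem_image]
  constructor
  · rintro ⟨⟨v, -, rfl⟩, hl⟩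
    have hne : (line v ∩ {f | ∀ i, f i ∈ A}).ncard ≠ 0 := by
      rintro h
      rw [h, Nat.cast_zero] at hl
      exact hl.not_gt hT
    obtain ⟨x, hxv, hx⟩ := Set.nonempty_of_ncard_ne_zero hne
    have hxS : x ∈ piFinset fun _ : ι => A := mem_piFinset.2 hx
    have hvx : line v = line x := (line_eq_of_mem hxv (ne_zero_of_mem_piFinset hA hxS)).symm
    rw [hvx, line_inter_setOf_forall_mem hA x, Set.ncard_coe_finset] at hl
    exact ⟨⟨x, hxS, hvx.symm⟩, hvx ▸ hl⟩
  · rintro ⟨⟨x, hxS, rfl⟩, hl⟩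
    refine ⟨⟨x, ne_zero_of_mem_piFinset hA hxS, rfl⟩, ?_⟩
    rwa [line_inter_setOf_forall_mem hA x, Set.ncard_coe_finset]

theorem line_eq_line_cons_div {n : ℕ} {x : Fin (n + 1) → K} (hx : x 0 ≠ 0) :
    line x = line (Fin.cons 1 fun i => x i.succ / x 0) := by
  have hx_eq : x = x 0 • Fin.cons 1 fun i => x i.succ / x 0 := by
    ext i
    cases i using Fin.cases <;> simp [mul_div_cancel₀ _ hx]
  exact (congrArg line hx_eq).trans (line_smul hx _)

theorem card_image_line_le [DecidableEq K] (n : ℕ) [DecidableEq (Set (Fin (n + 1) → K))]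
    (hA : 0 ∉ A) :
    #((piFinset fun _ : Fin (n + 1) => A).image line) ≤ #(A / A) ^ n := by
  rw [← card_piFinset_const]
  refine card_le_card_of_surjOn (fun c => line (Fin.cons 1 c)) ?_
  intro l hl
  obtain ⟨x, hx, rfl⟩ := mem_image.1 hl
  have hxA := mem_piFinset.1 hx
  exact ⟨_, mem_piFinset.2 fun i => div_mem_div (hxA i.succ) (hxA 0),
    (line_eq_line_cons_div fun h => hA (h ▸ hxA 0)).symm⟩

end Lines

theorem stmt_15 (k : ℕ) (hk : 2 ≤ k) (A : Finset ℝ) (hA : ∀ a ∈ A, 0 < a)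
    (hne : A.Nonempty) (H : Set (Set (Fin k → ℝ)))
    (hH : H = {l | (∃ v : Fin k → ℝ, v ≠ 0 ∧ l = {x | ∃ t : ℝ, x = t • v}) ∧
      (A.card : ℝ) ^ k / (2 * ((A / A).card : ℝ) ^ (k - 1)) ≤
        ((l ∩ {f : Fin k → ℝ | ∀ i, f i ∈ A}).ncard : ℝ)}) :
    (A.card : ℝ) ^ (k - 1) / 2 ≤ (H.ncard : ℝ) := by
  classical
  obtain ⟨n, rfl⟩ : ∃ n, k = n + 1 := ⟨k - 1, by omega⟩
  simp only [Nat.add_sub_cancel] at hH ⊢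
  have h0 : (0 : ℝ) ∉ A := fun h => (hA 0 h).false
  have hA_pos : (0 : ℝ) < #A := by exact_mod_cast hne.card_pos
  have hT : 0 < (#A : ℝ) ^ (n + 1) / (2 * (#(A / A) : ℝ) ^ n) := by
    have := (hne.div hne).card_pos; positivity
  rw [hH.trans (setOf_popular_lines_eq h0 hT), Set.ncard_coe_finset]
  have key := card_div_two_le_card_filter_popular_mul (piFinset fun _ : Fin (n + 1) => A) line
    (N := #A) (M := #(A / A) ^ n) (fun l => by exact_mod_cast card_filter_line_eq_le h0 l)
    (by exact_mod_cast card_image_line_le n h0)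
  rw [card_piFinset_const, Nat.cast_pow] at key
  refine le_of_mul_le_mul_right ?_ hA_pos
  rwa [div_mul_eq_mul_div, ← pow_succ]
end

section
/- If A is a finite set of positive reals with |A| ≥ 2 and |AA| ≤ |A|^{1+ε}, then |A+A| ≥ |A|^{(3-ε)/2} / (2⌈log₂|A|⌉^{1/2}). -/
/-!
Solymosi's argument. For a slope `s ∈ A / A` let `r(s)` be the number of points of `A × A` on
the line `y = s x`. Cauchy–Schwarz gives `|A|⁴ ≤ |AA| · Eₘ[A]` and `Eₘ[A] ≤ ∑ r(s)²`. Since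
`1 ≤ r(s) ≤ |A|`, sorting the slopes into `⌈log₂ |A|⌉` dyadic classes of `r` yields a class `C`
carrying at least a `1 / ⌈log₂ |A|⌉` share of this sum. For consecutive slopes `s < s'` of `C`
the sumset of the points on the two lines has `r(s) r(s')` elements, lies in `(A+A) × (A+A)`,
and, `A` being positive, has all its slopes in `(s, s')`; so these sumsets are disjoint. As `r`
varies by at most a factor `2` on `C`, this gives `∑_{s ∈ C} r(s)² ≤ 4 |A+A|²`, hence
`|A|⁴ ≤ 4 ⌈log₂ |A|⌉ |AA| |A+A|²`, and the hypothesis on `|AA|` turns this into the claim.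
-/

open Finset Pointwise
open scoped Combinatorics.Additive

section Fiberwise

variable {ι κ : Type*} [DecidableEq κ]

theorem sum_card_fiber_sq_eq_card_filter_eq (s : Finset ι) (t : Finset κ) (f : ι → κ)
    (hf : ∀ a ∈ s, f a ∈ t) :
    ∑ b ∈ t, #{a ∈ s | f a = b} ^ 2 = #{x ∈ s ×ˢ s | f x.1 = f x.2} := by
  rw [card_eq_sum_card_fiberwise (f := fun x => f x.1) (t := t)
    (fun x hx => hf _ (mem_product.mp (mem_filter.mp hx).1).1)]
  refine sum_congr rfl fun b _ => ?_
  rw [sq, ← card_product]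
  congr 1
  ext x
  simp only [mem_filter, mem_product]
  constructor
  · rintro ⟨⟨h₁, e₁⟩, h₂, e₂⟩
    exact ⟨⟨⟨h₁, h₂⟩, e₁.trans e₂.symm⟩, e₁⟩
  · rintro ⟨⟨⟨h₁, h₂⟩, e⟩, e₁⟩
    exact ⟨⟨h₁, e₁⟩, h₂, e ▸ e₁⟩

theorem exists_dyadic_sum_le (s : Finset ι) (f w : ι → ℕ) {L : ℕ} (hL : 0 < L)
    (hf : ∀ x ∈ s, 0 < f x ∧ f x ≤ 2 ^ L) :
    ∃ k, ∑ x ∈ s, w x ≤ L * ∑ x ∈ s with 2 ^ k ≤ f x ∧ f x ≤ 2 ^ (k + 1), w x := by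
  set c : ι → ℕ := fun x => min (Nat.log 2 (f x)) (L - 1)
  have hc : ∀ x ∈ s, 2 ^ c x ≤ f x ∧ f x ≤ 2 ^ (c x + 1) := by
    intro x hx
    obtain ⟨hpos, hle⟩ := hf x hx
    refine ⟨(Nat.pow_le_pow_right two_pos (min_le_left _ _)).trans
      (Nat.pow_log_le_self 2 hpos.ne'), ?_⟩
    rcases le_total (Nat.log 2 (f x)) (L - 1) with h | h
    · rw [show c x = Nat.log 2 (f x) from min_eq_left h]
      exact (Nat.lt_pow_succ_log_self one_lt_two _).le
    · rwa [show c x = L - 1 from min_eq_right h, Nat.sub_add_cancel hL]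
  have hmaps : ∀ x ∈ s, c x ∈ range L := fun x _ =>
    mem_range.mpr ((min_le_right _ _).trans_lt (Nat.sub_lt hL one_pos))
  obtain ⟨k, -, hk⟩ := exists_le_of_sum_le (nonempty_range_iff.mpr hL.ne')
    (f := fun _ => ∑ x ∈ s, w x)
    (g := fun k => L * ∑ x ∈ s with 2 ^ k ≤ f x ∧ f x ≤ 2 ^ (k + 1), w x) <| by
    rw [sum_const, card_range, smul_eq_mul, ← mul_sum, ← sum_fiberwise_of_maps_to hmaps]
    gcongr with k _ x hx
    rintro rfl
    exact hc x hx
  exact ⟨k, hk⟩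

end Fiberwise

theorem sum_le_sum_castSucc_add_succ {m : ℕ} (hm : 0 < m) (g : Fin (m + 1) → ℕ) :
    ∑ i, g i ≤ ∑ i : Fin m, (g i.castSucc + g i.succ) := by
  -- the right-hand side is `2 * ∑ i, g i - g 0 - g (Fin.last m)`
  have hends : g 0 + g (Fin.last m) ≤ ∑ i, g i := by
    have h0 : (0 : Fin (m + 1)) ≠ Fin.last m := by simp [Fin.ext_iff]; omega
    exact (sum_pair h0).symm.trans_le (sum_le_sum_of_subset (subset_univ _))
  rw [sum_add_distrib]
  have h₁ := Fin.sum_univ_castSucc g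
  have h₂ := Fin.sum_univ_succ g
  omega

theorem sq_add_sq_le_four_mul {a x y : ℕ} (hx : a ≤ x) (hx' : x ≤ 2 * a) (hy : a ≤ y)
    (hy' : y ≤ 2 * a) : x ^ 2 + y ^ 2 ≤ 4 * (x * y) := by
  nlinarith

noncomputable def slopeFiber (A : Finset ℝ) (s : ℝ) : Finset (ℝ × ℝ) :=
  {p ∈ A ×ˢ A | p.2 / p.1 = s}

section SlopeFiber

variable {A : Finset ℝ} {s t : ℝ} {p : ℝ × ℝ}

theorem mulEnergy_le_sum_card_slopeFiber_sq (hA : ∀ a ∈ A, a ≠ 0) :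
    Eₘ[A] ≤ ∑ s ∈ A / A, #(slopeFiber A s) ^ 2 := by
  unfold slopeFiber
  rw [sum_card_fiber_sq_eq_card_filter_eq _ _ _
    fun p hp => div_mem_div (mem_product.mp hp).2 (mem_product.mp hp).1, mulEnergy]
  refine card_le_card_of_injOn (fun x => ((x.1.2, x.1.1), x.2.1, x.2.2)) ?_ ?_
  · rintro ⟨⟨a₁, a₂⟩, b₁, b₂⟩ hx
    simp only [coe_filter, mem_product, Set.mem_ofPred_eq] at hx ⊢
    obtain ⟨⟨⟨ha₁, ha₂⟩, hb₁, hb₂⟩, e⟩ := hx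
    refine ⟨⟨⟨ha₂, ha₁⟩, hb₁, hb₂⟩, ?_⟩
    rw [div_eq_div_iff (hA _ ha₂) (hA _ hb₁)]
    linarith
  · rintro ⟨⟨_, _⟩, _, _⟩ _ ⟨⟨_, _⟩, _, _⟩ _ h
    simp_all

theorem mem_slopeFiber_iff (hA : ∀ a ∈ A, a ≠ 0) :
    p ∈ slopeFiber A s ↔ p.1 ∈ A ∧ p.2 ∈ A ∧ p.2 = s * p.1 := by
  simp only [slopeFiber, mem_filter, mem_product, and_assoc]
  refine and_congr_right fun h₁ => and_congr_right fun _ => ?_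
  rw [div_eq_iff (hA _ h₁)]

theorem card_slopeFiber_le (hA : ∀ a ∈ A, a ≠ 0) (s : ℝ) : #(slopeFiber A s) ≤ #A := by
  refine card_le_card_of_injOn Prod.fst (fun p hp => ((mem_slopeFiber_iff hA).mp hp).1) ?_
  intro p hp q hq h
  obtain ⟨-, -, hp₂⟩ := (mem_slopeFiber_iff hA).mp hp
  obtain ⟨-, -, hq₂⟩ := (mem_slopeFiber_iff hA).mp hq
  exact Prod.ext h (by rw [hp₂, hq₂, h])

theorem card_slopeFiber_pos (hs : s ∈ A / A) : 0 < #(slopeFiber A s) := by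
  obtain ⟨a, ha, b, hb, rfl⟩ := mem_div.mp hs
  exact card_pos.mpr ⟨(b, a), mem_filter.mpr ⟨mem_product.mpr ⟨hb, ha⟩, rfl⟩⟩

theorem slopeFiber_add_slopeFiber_subset :
    slopeFiber A s + slopeFiber A t ⊆ (A + A) ×ˢ (A + A) := by
  intro p hp
  obtain ⟨u, hu, v, hv, rfl⟩ := mem_add.mp hp
  obtain ⟨hu₁, hu₂⟩ := mem_product.mp (mem_filter.mp hu).1
  obtain ⟨hv₁, hv₂⟩ := mem_product.mp (mem_filter.mp hv).1
  exact mem_product.mpr ⟨add_mem_add hu₁ hv₁, add_mem_add hu₂ hv₂⟩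

theorem card_slopeFiber_add_slopeFiber (hA : ∀ a ∈ A, a ≠ 0) (hst : s ≠ t) :
    #(slopeFiber A s + slopeFiber A t) = #(slopeFiber A s) * #(slopeFiber A t) := by
  refine card_image₂_iff.mpr fun ⟨u, v⟩ huv ⟨u', v'⟩ huv' he => ?_
  simp only [Set.mem_prod, mem_coe] at huv huv'
  obtain ⟨-, -, hu⟩ := (mem_slopeFiber_iff hA).mp huv.1
  obtain ⟨-, -, hv⟩ := (mem_slopeFiber_iff hA).mp huv.2
  obtain ⟨-, -, hu'⟩ := (mem_slopeFiber_iff hA).mp huv'.1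
  obtain ⟨-, -, hv'⟩ := (mem_slopeFiber_iff hA).mp huv'.2
  obtain ⟨e₁, e₂⟩ := Prod.ext_iff.mp he
  simp only [Prod.fst_add, Prod.snd_add] at e₁ e₂
  -- on the lines `y = s x` and `y = t x`, a sum `(x + x', s x + t x')` determines `x` and `x'`
  have hv₁ : v.1 = v'.1 := by
    have : (t - s) * (v.1 - v'.1) = 0 := by linear_combination e₂ - s * e₁ - hu - hv + hu' + hv'
    exact sub_eq_zero.mp ((mul_eq_zero.mp this).resolve_left (sub_ne_zero.mpr hst.symm))
  have hu₁ : u.1 = u'.1 := by linarith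
  simp only [Prod.ext_iff]
  exact ⟨⟨hu₁, by rw [hu, hu', hu₁]⟩, hv₁, by rw [hv, hv', hv₁]⟩

theorem div_mem_Ioo_of_mem_slopeFiber_add_slopeFiber (hA : ∀ a ∈ A, 0 < a) (hst : s < t)
    (hp : p ∈ slopeFiber A s + slopeFiber A t) : p.2 / p.1 ∈ Set.Ioo s t := by
  have hA₀ : ∀ a ∈ A, a ≠ 0 := fun a ha => (hA a ha).ne'
  obtain ⟨u, hu, v, hv, rfl⟩ := mem_add.mp hp
  obtain ⟨hu₁, -, hu₂⟩ := (mem_slopeFiber_iff hA₀).mp hu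
  obtain ⟨hv₁, -, hv₂⟩ := (mem_slopeFiber_iff hA₀).mp hv
  have hu₀ := hA _ hu₁
  have hv₀ := hA _ hv₁
  rw [Prod.snd_add, Prod.fst_add, hu₂, hv₂, Set.mem_Ioo, lt_div_iff₀ (by positivity),
    div_lt_iff₀ (by positivity)]
  constructor <;> nlinarith

end SlopeFiber

section Solymosi

variable {A : Finset ℝ}

theorem sum_card_slopeFiber_mul_adjacent_le (hA : ∀ a ∈ A, 0 < a) (C : Finset ℝ) {m : ℕ}
    (hC : #C = m + 1) :
    ∑ i : Fin m, #(slopeFiber A (C.orderEmbOfFin hC i.castSucc)) *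
      #(slopeFiber A (C.orderEmbOfFin hC i.succ)) ≤ #(A + A) ^ 2 := by
  set e := C.orderEmbOfFin hC
  set P : Fin m → Finset (ℝ × ℝ) := fun i =>
    slopeFiber A (e i.castSucc) + slopeFiber A (e i.succ)
  have hlt : ∀ i : Fin m, e i.castSucc < e i.succ := fun i => e.strictMono i.castSucc_lt_succ
  have hdisj : ∀ i j, i < j → Disjoint (P i) (P j) := fun i j h => by
    refine disjoint_left.mpr fun p hpi hpj => ?_
    have hi := div_mem_Ioo_of_mem_slopeFiber_add_slopeFiber hA (hlt i) hpi
    have hj := div_mem_Ioo_of_mem_slopeFiber_add_slopeFiber hA (hlt j) hpj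
    have hij : e i.succ ≤ e j.castSucc := e.monotone (Fin.succ_le_castSucc_iff.mpr h)
    exact (hij.trans_lt (hj.1.trans hi.2)).false
  have hpair : ((univ : Finset (Fin m)) : Set (Fin m)).PairwiseDisjoint P :=
    fun i _ j _ hij => hij.lt_or_gt.elim (hdisj i j) fun h => (hdisj j i h).symm
  calc _ = ∑ i, #(P i) := sum_congr rfl fun i _ =>
        (card_slopeFiber_add_slopeFiber (fun a ha => (hA a ha).ne') (hlt i).ne).symm
    _ = #(univ.biUnion P) := (card_biUnion hpair).symm
    _ ≤ #((A + A) ×ˢ (A + A)) :=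
        card_le_card (biUnion_subset.mpr fun _ _ => slopeFiber_add_slopeFiber_subset)
    _ = #(A + A) ^ 2 := by rw [card_product, sq]

theorem sum_card_slopeFiber_sq_le_of_dyadic (hA : ∀ a ∈ A, 0 < a) (C : Finset ℝ) (k : ℕ)
    (hC : ∀ s ∈ C, 2 ^ k ≤ #(slopeFiber A s) ∧ #(slopeFiber A s) ≤ 2 ^ (k + 1)) :
    ∑ s ∈ C, #(slopeFiber A s) ^ 2 ≤ 4 * #(A + A) ^ 2 := by
  obtain hC₀ | ⟨m, hm⟩ : #C = 0 ∨ ∃ m, #C = m + 1 := by cases #C <;> simp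
  · simp [card_eq_zero.mp hC₀]
  set e := C.orderEmbOfFin hm
  have hsum : ∑ s ∈ C, #(slopeFiber A s) ^ 2 = ∑ i, #(slopeFiber A (e i)) ^ 2 := by
    rw [← map_orderEmbOfFin_univ C hm, sum_map]
    rfl
  obtain rfl | hm₀ := Nat.eq_zero_or_pos m
  · obtain ⟨s, rfl⟩ := card_eq_one.mp hm
    have hAA : #A ≤ #(A + A) := by
      obtain rfl | hA₀ := A.eq_empty_or_nonempty
      · simp
      · exact card_le_card_add_left hA₀
    rw [sum_singleton]
    have := card_slopeFiber_le (fun a ha => (hA a ha).ne') s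
    nlinarith
  calc ∑ s ∈ C, #(slopeFiber A s) ^ 2
      ≤ ∑ i : Fin m, (#(slopeFiber A (e i.castSucc)) ^ 2 + #(slopeFiber A (e i.succ)) ^ 2) :=
        hsum ▸ sum_le_sum_castSucc_add_succ hm₀ _
    _ ≤ ∑ i : Fin m, 4 * (#(slopeFiber A (e i.castSucc)) * #(slopeFiber A (e i.succ))) := by
        gcongr with i
        obtain ⟨h₁, h₁'⟩ := hC _ (C.orderEmbOfFin_mem hm i.castSucc)
        obtain ⟨h₂, h₂'⟩ := hC _ (C.orderEmbOfFin_mem hm i.succ)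
        exact sq_add_sq_le_four_mul h₁ (pow_succ' 2 k ▸ h₁') h₂ (pow_succ' 2 k ▸ h₂')
    _ ≤ 4 * #(A + A) ^ 2 := by
        rw [← mul_sum]
        exact Nat.mul_le_mul_left 4 (sum_card_slopeFiber_mul_adjacent_le hA C hm)

end Solymosi

theorem card_pow_four_le_clog_mul_card_mul_mul_card_add_sq {A : Finset ℝ} (hA : ∀ a ∈ A, 0 < a)
    (h2 : 2 ≤ #A) : #A ^ 4 ≤ 4 * Nat.clog 2 #A * (#(A * A) * #(A + A) ^ 2) := by
  have hA₀ : ∀ a ∈ A, a ≠ 0 := fun a ha => (hA a ha).ne'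
  obtain ⟨k, hk⟩ := exists_dyadic_sum_le (A / A) (fun s => #(slopeFiber A s))
    (fun s => #(slopeFiber A s) ^ 2) (Nat.clog_pos one_lt_two h2) fun s hs =>
      ⟨card_slopeFiber_pos hs, (card_slopeFiber_le hA₀ s).trans (Nat.le_pow_clog one_lt_two _)⟩
  calc #A ^ 4 = #A ^ 2 * #A ^ 2 := by ring
    _ ≤ #(A * A) * Eₘ[A] := le_card_mul_mul_mulEnergy A A
    _ ≤ #(A * A) * ∑ s ∈ A / A, #(slopeFiber A s) ^ 2 := by
        gcongr
        exact mulEnergy_le_sum_card_slopeFiber_sq hA₀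
    _ ≤ #(A * A) * (Nat.clog 2 #A * (4 * #(A + A) ^ 2)) := by
        gcongr
        refine hk.trans (Nat.mul_le_mul_left _ ?_)
        exact sum_card_slopeFiber_sq_le_of_dyadic hA _ k fun s hs => (mem_filter.mp hs).2
    _ = 4 * Nat.clog 2 #A * (#(A * A) * #(A + A) ^ 2) := by ring

theorem rpow_div_le_of_pow_four_le {n L M S ε : ℝ} (hn : 0 < n) (hL : 0 < L) (hS : 0 ≤ S)
    (hM : M ≤ n ^ (1 + ε)) (h : n ^ 4 ≤ 4 * L * (M * S ^ 2)) :
    n ^ ((3 - ε) / 2) / (2 * L ^ (1 / 2 : ℝ)) ≤ S := by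
  have hsq : n ^ (3 - ε) ≤ 4 * L * S ^ 2 := by
    refine le_of_mul_le_mul_right ?_ (Real.rpow_pos_of_pos hn (1 + ε))
    calc n ^ (3 - ε) * n ^ (1 + ε) = n ^ 4 := by
          rw [← Real.rpow_add hn, ← Real.rpow_natCast]
          norm_num
      _ ≤ 4 * L * (M * S ^ 2) := h
      _ ≤ 4 * L * (n ^ (1 + ε) * S ^ 2) := by gcongr
      _ = 4 * L * S ^ 2 * n ^ (1 + ε) := by ring
  rw [div_le_iff₀ (by positivity), div_eq_mul_one_div, Real.rpow_mul hn.le,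
    ← Real.sqrt_eq_rpow, ← Real.sqrt_eq_rpow]
  calc √(n ^ (3 - ε)) ≤ √(2 ^ 2 * L * S ^ 2) := Real.sqrt_le_sqrt (by linarith)
    _ = S * (2 * √L) := by
        rw [Real.sqrt_mul (by positivity), Real.sqrt_mul (by positivity), Real.sqrt_sq hS,
          Real.sqrt_sq zero_le_two]
        ring

theorem stmt_19 (A : Finset ℝ) (hA : ∀ a ∈ A, 0 < a) (h2 : 2 ≤ A.card) (ε : ℝ)
    (hAA : ((A * A).card : ℝ) ≤ (A.card : ℝ) ^ ((1 : ℝ) + ε)) :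
    ((A + A).card : ℝ) ≥
      (A.card : ℝ) ^ (((3 : ℝ) - ε) / 2) /
        (2 * (Nat.clog 2 A.card : ℝ) ^ ((1 : ℝ) / 2)) := by
  have hsol : (#A : ℝ) ^ 4 ≤ 4 * Nat.clog 2 #A * (#(A * A) * (#(A + A) : ℝ) ^ 2) := by
    exact_mod_cast card_pow_four_le_clog_mul_card_mul_mul_card_add_sq hA h2
  exact rpow_div_le_of_pow_four_le (by positivity)
    (Nat.cast_pos.mpr (Nat.clog_pos one_lt_two h2)) (Nat.cast_nonneg _) hAA hsol
end
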